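/- arXiv:2110.13477 — 8 statements merged into one kernel-verified Lean document; each statement's English description precedes it below -/
import Mathlib

section
/- Let d ≥ 2, let Σ ∈ ℝ^{d×d} be symmetric positive definite, let a ∈ ℝ^d not be in (−∞,0]^d, and let ã be the unique solution of Π_Σ(a). Then there exists a unique nonempty index set I ⊆ {1,…,d}, with complement J := {1,…,d} \ I, such that: (i) ã_I = a_I and a_I ≠ 0_I; (ii) Σ_{II}^{−1} a_I > 0_I componentwise, and (if J is nonempty) ã_J = Σ_{JI} Σ_{II}^{−1} a_I ≥ a_J componentwise; (iii) the vector λ := Σ^{−1} ã satisfies λ_I = Σ_{II}^{−1} a_I > 0_I and λ_J = 0_J. -/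
/-! `λ := Σ⁻¹ ã` is half the gradient of the objective at `ã`. Moving `ã` along `e_j` keeps it
feasible, and so does moving along `-e_j` when the constraint `j` is slack; first-order optimality
therefore gives `λ ≥ 0`, with `λ_j = 0` on slack constraints. The index set is forced to be the
support `I` of `λ`: there the constraints are active, and `ã = Σ λ` with `λ` supported on `I`
restricts to `Σ_{II} λ_I = a_I`. Finally `I ≠ ∅` because `ã ≥ a` is nonzero. -/

open Matrix Filter Topology

namespace Matrix

section QuadraticForm

variable {n : Type*} [Fintype n] {M : Matrix n n ℝ}

lemma IsSymm.dotProduct_mulVec_comm (hM : M.IsSymm) (x y : n → ℝ) :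
    x ⬝ᵥ M *ᵥ y = y ⬝ᵥ M *ᵥ x := by
  rw [dotProduct_mulVec, ← mulVec_transpose, hM.eq, dotProduct_comm]

lemma IsSymm.dotProduct_mulVec_add_smul (hM : M.IsSymm) (x v : n → ℝ) (t : ℝ) :
    (x + t • v) ⬝ᵥ M *ᵥ (x + t • v) =
      x ⬝ᵥ M *ᵥ x + t * (2 * (v ⬝ᵥ M *ᵥ x) + t * (v ⬝ᵥ M *ᵥ v)) := by
  simp only [mulVec_add, mulVec_smul, dotProduct_add, add_dotProduct, dotProduct_smul,
    smul_dotProduct, smul_eq_mul, hM.dotProduct_mulVec_comm x v]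
  ring

lemma IsSymm.dotProduct_mulVec_nonneg_of_isMinOn (hM : M.IsSymm) {K : Set (n → ℝ)}
    {x v : n → ℝ} (hx : IsMinOn (fun y => y ⬝ᵥ M *ᵥ y) K x) {ε : ℝ} (hε : 0 < ε)
    (hv : ∀ t ∈ Set.Ioc 0 ε, x + t • v ∈ K) : 0 ≤ v ⬝ᵥ M *ᵥ x := by
  set slope := fun t : ℝ => 2 * (v ⬝ᵥ M *ᵥ x) + t * (v ⬝ᵥ M *ᵥ v)
  have hlim : Tendsto slope (𝓝[>] 0) (𝓝 (2 * (v ⬝ᵥ M *ᵥ x))) := by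
    have hcont : Continuous slope := by fun_prop
    exact tendsto_nhdsWithin_of_tendsto_nhds (hcont.tendsto' 0 _ (by simp [slope]))
  have hslope : ∀ᶠ t in 𝓝[>] 0, 0 ≤ slope t := by
    filter_upwards [Ioc_mem_nhdsGT hε] with t ht
    have hle := isMinOn_iff.1 hx _ (hv t ht)
    rw [hM.dotProduct_mulVec_add_smul] at hle
    exact nonneg_of_mul_nonneg_right (by linarith) ht.1
  linarith [ge_of_tendsto hlim hslope]

variable [DecidableEq n] {a x : n → ℝ}

lemma IsSymm.mulVec_apply_nonneg_of_isMinOn_Ici (hM : M.IsSymm)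
    (hx : IsMinOn (fun y => y ⬝ᵥ M *ᵥ y) (Set.Ici a) x) (hax : a ≤ x) (j : n) :
    0 ≤ (M *ᵥ x) j := by
  have := hM.dotProduct_mulVec_nonneg_of_isMinOn (v := Pi.single j 1) hx one_pos
    fun t ht => hax.trans (le_add_of_nonneg_right (smul_nonneg ht.1.le (by simp)))
  simpa using this

lemma IsSymm.mulVec_apply_eq_zero_of_isMinOn_Ici (hM : M.IsSymm)
    (hx : IsMinOn (fun y => y ⬝ᵥ M *ᵥ y) (Set.Ici a) x) (hax : a ≤ x) {j : n}
    (hj : a j < x j) : (M *ᵥ x) j = 0 := by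
  refine le_antisymm ?_ (hM.mulVec_apply_nonneg_of_isMinOn_Ici hx hax j)
  have := hM.dotProduct_mulVec_nonneg_of_isMinOn (v := -Pi.single j 1) hx (sub_pos.2 hj)
    fun t ht i => by
      rcases eq_or_ne i j with rfl | hi
      · simp only [smul_neg, Pi.add_apply, Pi.neg_apply, Pi.smul_apply, Pi.single_eq_same,
          smul_eq_mul, mul_one]
        linarith [ht.2]
      · simpa [Pi.single_eq_of_ne hi] using hax i
  simpa using this

end QuadraticForm

lemma mulVec_apply_eq_sum_subtype {m n R : Type*} [Fintype n] [NonUnitalNonAssocSemiring R]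
    (A : Matrix m n R) {v : n → R} {I : Finset n} (hv : ∀ j ∉ I, v j = 0) (i : m) :
    (A *ᵥ v) i = ∑ k : I, A i k * v k := by
  rw [mulVec, dotProduct, Finset.sum_coe_sort I fun k => A i k * v k]
  exact (Finset.sum_subset (Finset.subset_univ I) fun k _ hk => by simp [hv k hk]).symm

lemma PosDef.inv_submatrix_mulVec_eq {n : Type*} [Fintype n] [DecidableEq n]
    {S : Matrix n n ℝ} (hS : S.PosDef) {v : n → ℝ} {I : Finset n} (hv : ∀ j ∉ I, v j = 0) :
    (S.submatrix (Subtype.val : I → n) Subtype.val)⁻¹ *ᵥ (fun i : I => (S *ᵥ v) i) =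
      fun i : I => v i := by
  have : Invertible (S.submatrix (Subtype.val : I → n) Subtype.val) :=
    (hS.submatrix Subtype.val_injective).isUnit.invertible
  refine inv_mulVec_eq_vec (funext fun i => ?_)
  rw [mulVec_apply_eq_sum_subtype S hv]
  rfl

end Matrix

open Finset

theorem stmt1_general {d : ℕ}
    (S : Matrix (Fin d) (Fin d) ℝ) (hS : S.PosDef)
    (a : Fin d → ℝ) (ha : ∃ i, 0 < a i)
    (ta : Fin d → ℝ)
    (hta : (∀ i, a i ≤ ta i) ∧
      ∀ y : Fin d → ℝ, (∀ i, a i ≤ y i) → ta ⬝ᵥ S⁻¹ *ᵥ ta ≤ y ⬝ᵥ S⁻¹ *ᵥ y) :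
    ∃! I : Finset (Fin d), I.Nonempty ∧
      -- (i) `ta_I = a_I` and `a_I ≠ 0_I`
      (∀ i ∈ I, ta i = a i) ∧ (∃ i ∈ I, a i ≠ 0) ∧
      -- (ii) `Σ_{II}⁻¹ a_I > 0` componentwise
      (∀ i : {x // x ∈ I},
        0 < ((Matrix.of fun p q : {x // x ∈ I} => S p.1 q.1)⁻¹ *ᵥ
              fun p : {x // x ∈ I} => a p.1) i) ∧
      -- (ii) for `j ∈ J`: `ta j = (Σ_{JI} Σ_{II}⁻¹ a_I)_j` and `ta j ≥ a j`
      (∀ j, j ∉ I →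
        ta j = ∑ i : {x // x ∈ I}, S j i.1 *
          ((Matrix.of fun p q : {x // x ∈ I} => S p.1 q.1)⁻¹ *ᵥ
            fun p : {x // x ∈ I} => a p.1) i ∧
        a j ≤ ta j) ∧
      -- (iii) `λ_I = Σ_{II}⁻¹ a_I` (which is `> 0` by (ii)) and `λ_J = 0`
      (∀ i : {x // x ∈ I}, (S⁻¹ *ᵥ ta) i.1 =
        ((Matrix.of fun p q : {x // x ∈ I} => S p.1 q.1)⁻¹ *ᵥ
          fun p : {x // x ∈ I} => a p.1) i) ∧
      (∀ j, j ∉ I → (S⁻¹ *ᵥ ta) j = 0) := by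
  obtain ⟨hfeas, hmin⟩ := hta
  have hsymm : (S⁻¹).IsSymm := (isHermitian_iff_isSymm.1 hS.isHermitian).inv
  have hopt : IsMinOn (fun y => y ⬝ᵥ S⁻¹ *ᵥ y) (Set.Ici a) ta := isMinOn_iff.2 hmin
  set lam := S⁻¹ *ᵥ ta with hlam
  have hSlam : S *ᵥ lam = ta := by
    rw [hlam, mulVec_mulVec, mul_nonsing_inv _ hS.det_pos.ne'.isUnit, one_mulVec]
  set I := univ.filter (lam · ≠ 0)
  have hoff : ∀ j ∉ I, lam j = 0 := by simp [I]
  have hactive : ∀ i ∈ I, ta i = a i := fun i hi => ((hfeas i).eq_or_lt.resolve_right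
    fun hlt => (mem_filter.1 hi).2 (hsymm.mulVec_apply_eq_zero_of_isMinOn_Ici hopt hfeas hlt)).symm
  have hreduced : (Matrix.of fun p q : I => S p.1 q.1)⁻¹ *ᵥ (fun p : I => a p.1) =
      fun p : I => lam p := by
    rw [← hS.inv_submatrix_mulVec_eq hoff, hSlam]
    exact congrArg _ (funext fun p => (hactive p p.2).symm)
  have hpos : ∀ i ∈ I, 0 < lam i := fun i hi =>
    (hsymm.mulVec_apply_nonneg_of_isMinOn_Ici hopt hfeas i).lt_of_ne' (mem_filter.1 hi).2
  obtain ⟨i₀, hi₀⟩ : I.Nonempty := by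
    obtain ⟨i, hai⟩ := ha
    by_contra hI
    have : ta = 0 := by
      rw [← hSlam, show lam = 0 from funext fun j => hoff j (by simp_all)]; exact mulVec_zero _
    linarith [hfeas i, show ta i = 0 by simp [this]]
  refine ⟨I, ⟨⟨i₀, hi₀⟩, hactive, ?_, fun i => hreduced ▸ hpos i i.2, fun j hj => ⟨?_, hfeas j⟩,
    fun i => (congrFun hreduced i).symm, hoff⟩, ?_⟩
  · by_contra! hzero
    have hlam₀ := congrFun hreduced ⟨i₀, hi₀⟩
    rw [show (fun p : I => a p.1) = 0 from funext fun p => hzero p p.2, mulVec_zero] at hlam₀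
    exact (hpos i₀ hi₀).ne' hlam₀.symm
  · rw [hreduced, ← hSlam, mulVec_apply_eq_sum_subtype S hoff]
  · rintro J ⟨-, -, -, hJpos, -, hJlam, hJoff⟩
    ext i
    refine ⟨fun hi => mem_filter.2 ⟨mem_univ i, ?_⟩, fun hi => ?_⟩
    · exact (hJlam ⟨i, hi⟩ ▸ hJpos ⟨i, hi⟩).ne'
    · by_contra hiJ
      exact (mem_filter.1 hi).2 (hJoff i hiJ)

/-- For `Σ` symmetric positive definite and `a ∉ (-∞,0]^d`, if `ta` is the
(unique) solution of the quadratic program `Π_Σ(a)`, then there exists a unique nonempty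
index set `I ⊆ {1,…,d}` such that (i) `ta_I = a_I ≠ 0_I`; (ii) `Σ_{II}⁻¹ a_I > 0` and, for
`j ∈ J := Iᶜ`, `ta_J = Σ_{JI} Σ_{II}⁻¹ a_I ≥ a_J`; (iii) `λ := Σ⁻¹ ta` satisfies
`λ_I = Σ_{II}⁻¹ a_I > 0` and `λ_J = 0`. -/
theorem stmt1 {d : ℕ} (hd : 2 ≤ d)
    (S : Matrix (Fin d) (Fin d) ℝ) (hS : S.PosDef)
    (a : Fin d → ℝ) (ha : ∃ i, 0 < a i)
    (ta : Fin d → ℝ)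
    (hta : (∀ i, a i ≤ ta i) ∧
      ∀ y : Fin d → ℝ, (∀ i, a i ≤ y i) → ta ⬝ᵥ S⁻¹ *ᵥ ta ≤ y ⬝ᵥ S⁻¹ *ᵥ y) :
    ∃! I : Finset (Fin d), I.Nonempty ∧
      -- (i) `ta_I = a_I` and `a_I ≠ 0_I`
      (∀ i ∈ I, ta i = a i) ∧ (∃ i ∈ I, a i ≠ 0) ∧
      -- (ii) `Σ_{II}⁻¹ a_I > 0` componentwise
      (∀ i : {x // x ∈ I},
        0 < ((Matrix.of fun p q : {x // x ∈ I} => S p.1 q.1)⁻¹ *ᵥ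
              fun p : {x // x ∈ I} => a p.1) i) ∧
      -- (ii) for `j ∈ J`: `ta j = (Σ_{JI} Σ_{II}⁻¹ a_I)_j` and `ta j ≥ a j`
      (∀ j, j ∉ I →
        ta j = ∑ i : {x // x ∈ I}, S j i.1 *
          ((Matrix.of fun p q : {x // x ∈ I} => S p.1 q.1)⁻¹ *ᵥ
            fun p : {x // x ∈ I} => a p.1) i ∧
        a j ≤ ta j) ∧
      -- (iii) `λ_I = Σ_{II}⁻¹ a_I` (which is `> 0` by (ii)) and `λ_J = 0`
      (∀ i : {x // x ∈ I}, (S⁻¹ *ᵥ ta) i.1 =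
        ((Matrix.of fun p q : {x // x ∈ I} => S p.1 q.1)⁻¹ *ᵥ
          fun p : {x // x ∈ I} => a p.1) i) ∧
      (∀ j, j ∉ I → (S⁻¹ *ᵥ ta) j = 0) :=
  stmt1_general S hS a ha ta hta
end

section
/- Let d ≥ 2, let Σ ∈ ℝ^{d×d} be symmetric positive definite, let a ∈ ℝ^d not be in (−∞,0]^d, let ã be the unique solution of Π_Σ(a), and let I := {i : (Σ^{−1}ã)_i > 0}. Then the minimum value satisfies min_{x ≥ a} x^⊤ Σ^{−1} x = ã^⊤ Σ^{−1} ã = a^⊤ Σ^{−1} ã = a_I^⊤ Σ_{II}^{−1} a_I, and this common value is strictly positive. -/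
open Matrix Finset

/-!
Perturbing the minimizer `ã` along a coordinate axis `eᵢ` (in the direction allowed by the
constraint) shows that the multiplier `w = Σ⁻¹ã` is nonnegative and vanishes wherever `ãᵢ > aᵢ`.
Hence `ãᵀΣ⁻¹ã = aᵀw`, `w` is supported on `I`, and `ã = a` on `I`. The latter two give
`Σ_{II} w_I = (Σw)_I = a_I`, so `aᵀw = a_Iᵀ Σ_{II}⁻¹ a_I`.
-/

theorem nonneg_of_forall_mem_Icc_quadratic_nonneg {w c δ : ℝ} (hc : 0 < c) (hδ : 0 < δ)
    (h : ∀ t ∈ Set.Icc 0 δ, 0 ≤ 2 * t * w + t ^ 2 * c) : 0 ≤ w := by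
  by_contra! hw
  set t := min δ (-w / c)
  have ht : 0 < t := lt_min hδ (div_pos (neg_pos.2 hw) hc)
  have htc : t * c ≤ -w := (le_div_iff₀ hc).1 (min_le_right _ _)
  have := h t ⟨ht.le, min_le_left _ _⟩
  nlinarith

theorem Finset.sum_coe_sort_of_eq_zero {ι M : Type*} [Fintype ι] [AddCommMonoid M]
    {I : Finset ι} {f : ι → M} (hf : ∀ i ∉ I, f i = 0) : ∑ p : I, f p = ∑ i, f i :=
  (sum_coe_sort I f).trans (sum_subset (subset_univ I) fun i _ hi ↦ hf i hi)

namespace Matrix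

variable {ι : Type*} [Fintype ι]

theorem dotProduct_mulVec_comm_of_isSymm {A : Matrix ι ι ℝ} (hA : A.IsSymm) (u v : ι → ℝ) :
    u ⬝ᵥ A *ᵥ v = v ⬝ᵥ A *ᵥ u := by
  rw [dotProduct_mulVec, ← mulVec_transpose, hA.eq, dotProduct_comm]

theorem dotProduct_mulVec_add_smul_single [DecidableEq ι] {A : Matrix ι ι ℝ} (hA : A.IsSymm)
    (x : ι → ℝ) (i : ι) (t : ℝ) :
    (x + t • Pi.single i 1) ⬝ᵥ A *ᵥ (x + t • Pi.single i 1) =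
      x ⬝ᵥ A *ᵥ x + 2 * t * (A *ᵥ x) i + t ^ 2 * A i i := by
  have hcross : x ⬝ᵥ A.col i = (A *ᵥ x) i := by
    rw [← mulVec_single_one, dotProduct_mulVec_comm_of_isSymm hA, single_one_dotProduct]
  simp only [mulVec_add, mulVec_smul, dotProduct_add, add_dotProduct, dotProduct_smul,
    smul_dotProduct, smul_eq_mul, single_one_dotProduct, mulVec_single_one, hcross, col_apply]
  ring

section Minimizer

variable [DecidableEq ι] {A : Matrix ι ι ℝ} {a x : ι → ℝ}

theorem quadratic_nonneg_of_isMinOn (hA : A.IsSymm)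
    (hx : IsMinOn (fun y ↦ y ⬝ᵥ A *ᵥ y) (Set.Ici a) x) {i : ι} {t : ℝ}
    (ht : a ≤ x + t • Pi.single i 1) :
    0 ≤ 2 * t * (A *ᵥ x) i + t ^ 2 * A i i := by
  have := isMinOn_iff.1 hx _ ht
  rw [dotProduct_mulVec_add_smul_single hA] at this
  linarith

theorem mulVec_nonneg_of_isMinOn (hA : A.PosDef) (hax : a ≤ x)
    (hx : IsMinOn (fun y ↦ y ⬝ᵥ A *ᵥ y) (Set.Ici a) x) (i : ι) : 0 ≤ (A *ᵥ x) i := by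
  refine nonneg_of_forall_mem_Icc_quadratic_nonneg (hA.diag_pos (i := i)) one_pos
    fun t ht ↦ quadratic_nonneg_of_isMinOn (isHermitian_iff_isSymm.1 hA.isHermitian) hx ?_
  exact hax.trans (le_add_of_nonneg_right (smul_nonneg ht.1 (Pi.single_nonneg.2 zero_le_one)))

theorem mulVec_eq_zero_of_isMinOn_of_lt (hA : A.PosDef) (hax : a ≤ x)
    (hx : IsMinOn (fun y ↦ y ⬝ᵥ A *ᵥ y) (Set.Ici a) x) {i : ι} (hi : a i < x i) :
    (A *ᵥ x) i = 0 := by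
  refine le_antisymm ?_ (mulVec_nonneg_of_isMinOn hA hax hx i)
  suffices 0 ≤ -(A *ᵥ x) i by linarith
  refine nonneg_of_forall_mem_Icc_quadratic_nonneg (hA.diag_pos (i := i)) (sub_pos.2 hi)
    fun t ht ↦ ?_
  have hfeas : a ≤ x + (-t) • Pi.single i 1 := fun j ↦ by
    rcases eq_or_ne j i with rfl | hj
    · simp only [Pi.add_apply, Pi.smul_apply, Pi.single_eq_same, smul_eq_mul]
      linarith [ht.2]
    · simpa [Pi.single_eq_of_ne hj] using hax j
  have := quadratic_nonneg_of_isMinOn (isHermitian_iff_isSymm.1 hA.isHermitian) hx hfeas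
  linarith

theorem dotProduct_mulVec_eq_of_isMinOn (hA : A.PosDef) (hax : a ≤ x)
    (hx : IsMinOn (fun y ↦ y ⬝ᵥ A *ᵥ y) (Set.Ici a) x) :
    x ⬝ᵥ A *ᵥ x = a ⬝ᵥ A *ᵥ x := by
  refine sum_congr rfl fun i _ ↦ ?_
  rcases (hax i).lt_or_eq with hi | hi
  · rw [mulVec_eq_zero_of_isMinOn_of_lt hA hax hx hi, mul_zero, mul_zero]
  · rw [hi]

end Minimizer

theorem restrict_dotProduct_submatrix_inv_mulVec [DecidableEq ι] {S : Matrix ι ι ℝ}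
    (hS : S.PosDef) {I : Finset ι} {w : ι → ℝ} (hw : ∀ i ∉ I, w i = 0) :
    (fun p : I ↦ (S *ᵥ w) p) ⬝ᵥ (S.submatrix (↑) (↑))⁻¹ *ᵥ (fun p : I ↦ (S *ᵥ w) p) =
      (S *ᵥ w) ⬝ᵥ w := by
  have hT : S.submatrix (↑) (↑) *ᵥ (fun p : I ↦ w p) = fun p : I ↦ (S *ᵥ w) p :=
    funext fun p ↦ sum_coe_sort_of_eq_zero (f := fun j ↦ S p j * w j) fun j hj ↦ by
      rw [hw j hj, mul_zero]
  have := (hS.submatrix (Subtype.val_injective (p := (· ∈ I)))).isUnit.invertible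
  rw [inv_mulVec_eq_vec hT.symm]
  exact sum_coe_sort_of_eq_zero (f := fun j ↦ (S *ᵥ w) j * w j) fun j hj ↦ by
    rw [hw j hj, mul_zero]

end Matrix

theorem stmt2_general {d : ℕ}
    (S : Matrix (Fin d) (Fin d) ℝ) (hS : S.PosDef)
    (a : Fin d → ℝ) (ha : ∃ i, 0 < a i)
    (ta : Fin d → ℝ)
    (hta : (∀ i, a i ≤ ta i) ∧
      ∀ y : Fin d → ℝ, (∀ i, a i ≤ y i) → ta ⬝ᵥ S⁻¹ *ᵥ ta ≤ y ⬝ᵥ S⁻¹ *ᵥ y)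
    (I : Finset (Fin d)) (hI : ∀ i, i ∈ I ↔ 0 < (S⁻¹ *ᵥ ta) i) :
    IsLeast {r : ℝ | ∃ x : Fin d → ℝ, (∀ i, a i ≤ x i) ∧ r = x ⬝ᵥ S⁻¹ *ᵥ x}
      (ta ⬝ᵥ S⁻¹ *ᵥ ta) ∧
    ta ⬝ᵥ S⁻¹ *ᵥ ta = a ⬝ᵥ S⁻¹ *ᵥ ta ∧
    ta ⬝ᵥ S⁻¹ *ᵥ ta =
      (fun p : {x // x ∈ I} => a p.1) ⬝ᵥ
        (Matrix.of fun p q : {x // x ∈ I} => S p.1 q.1)⁻¹ *ᵥ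
          (fun p : {x // x ∈ I} => a p.1) ∧
    0 < ta ⬝ᵥ S⁻¹ *ᵥ ta := by
  obtain ⟨hle, hmin⟩ := hta
  have hA := hS.inv
  have hx : IsMinOn (fun y ↦ y ⬝ᵥ S⁻¹ *ᵥ y) (Set.Ici a) ta := isMinOn_iff.2 hmin
  have hSw : S *ᵥ (S⁻¹ *ᵥ ta) = ta := by
    have := hS.isUnit.invertible
    rw [mulVec_mulVec, mul_inv_of_invertible, one_mulVec]
  have hw_off (i) (hi : i ∉ I) : (S⁻¹ *ᵥ ta) i = 0 :=
    le_antisymm (not_lt.1 (mt (hI i).2 hi)) (mulVec_nonneg_of_isMinOn hA hle hx i)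
  have hta_on (i) (hi : i ∈ I) : a i = ta i :=
    (hle i).lt_or_eq.resolve_left fun hlt ↦
      ((hI i).1 hi).ne' (mulVec_eq_zero_of_isMinOn_of_lt hA hle hx hlt)
  have hpos : 0 < ta ⬝ᵥ S⁻¹ *ᵥ ta := by
    obtain ⟨i, hi⟩ := ha
    have hta0 : ta ≠ 0 := fun h ↦ by simpa [h] using hi.trans_le (hle i)
    simpa using hA.dotProduct_mulVec_pos hta0
  refine ⟨⟨⟨ta, hle, rfl⟩, fun _ ⟨y, hy, hr⟩ ↦ hr ▸ hmin y hy⟩,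
    dotProduct_mulVec_eq_of_isMinOn hA hle hx, ?_, hpos⟩
  have haI : (fun p : I ↦ a p) = fun p : I ↦ (S *ᵥ (S⁻¹ *ᵥ ta)) p :=
    funext fun p ↦ by rw [hSw, hta_on p p.2]
  rw [haI]
  calc ta ⬝ᵥ S⁻¹ *ᵥ ta = (S *ᵥ (S⁻¹ *ᵥ ta)) ⬝ᵥ (S⁻¹ *ᵥ ta) := by rw [hSw]
    _ = _ := (restrict_dotProduct_submatrix_inv_mulVec hS hw_off).symm

/-- For `Σ` symmetric positive definite, `a ∉ (-∞,0]^d`, `ta` the unique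
solution of `Π_Σ(a)` and `I := {i : (Σ⁻¹ ta)_i > 0}`, the minimum value satisfies
`min_{x ≥ a} x^⊤Σ⁻¹x = ta^⊤Σ⁻¹ta = a^⊤Σ⁻¹ta = a_I^⊤ Σ_{II}⁻¹ a_I > 0`. -/
theorem stmt2 {d : ℕ} (hd : 2 ≤ d)
    (S : Matrix (Fin d) (Fin d) ℝ) (hS : S.PosDef)
    (a : Fin d → ℝ) (ha : ∃ i, 0 < a i)
    (ta : Fin d → ℝ)
    (hta : (∀ i, a i ≤ ta i) ∧
      ∀ y : Fin d → ℝ, (∀ i, a i ≤ y i) → ta ⬝ᵥ S⁻¹ *ᵥ ta ≤ y ⬝ᵥ S⁻¹ *ᵥ y)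
    (I : Finset (Fin d)) (hI : ∀ i, i ∈ I ↔ 0 < (S⁻¹ *ᵥ ta) i) :
    IsLeast {r : ℝ | ∃ x : Fin d → ℝ, (∀ i, a i ≤ x i) ∧ r = x ⬝ᵥ S⁻¹ *ᵥ x}
      (ta ⬝ᵥ S⁻¹ *ᵥ ta) ∧
    ta ⬝ᵥ S⁻¹ *ᵥ ta = a ⬝ᵥ S⁻¹ *ᵥ ta ∧
    ta ⬝ᵥ S⁻¹ *ᵥ ta =
      (fun p : {x // x ∈ I} => a p.1) ⬝ᵥ
        (Matrix.of fun p q : {x // x ∈ I} => S p.1 q.1)⁻¹ *ᵥ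
          (fun p : {x // x ∈ I} => a p.1) ∧
    0 < ta ⬝ᵥ S⁻¹ *ᵥ ta :=
  stmt2_general S hS a ha ta hta I hI
end

section
/- Let Σ ∈ ℝ^{d×d} be symmetric positive definite with Gaussian density φ(x) := (2π)^{−d/2} (det Σ)^{−1/2} exp(−x^⊤Σ^{−1}x/2), let c ∈ ℝ^d, and let a ∈ ℝ^d not be in (−∞,0]^d. Let ã be the unique solution of Π_Σ(a), λ := Σ^{−1}ã, I := {i : λ_i > 0}, J its complement, and U := {i ∈ J : ã_i = a_i}. Then, as u → ∞, ∫_{{w ∈ ℝ^d : w > u·a + c componentwise}} φ(w) dw is asymptotically equivalent to (u^{−|I|} φ(u·ã + c) / ∏_{i∈I} λ_i) · ∫_{ℝ^{|J|}} 1{x_U < 0_U} · exp(−(1/2) x_J^⊤ (Σ^{−1})_{JJ} x_J + ⟨(Σ^{−1}c)_J, x_J⟩) dx_J, where for J = ∅ the latter integral is interpreted as 1. (Equivalently: for X a centered Gaussian vector with covariance Σ, P(X − c > u·a) has this asymptotic behaviour as u → ∞.) -/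
open Matrix MeasureTheory Filter Set Topology

/-!
Put `A = Σ⁻¹`, `λ = A ã`, let `J` be the zero set of `λ` and `I = Jᶜ`. Minimality of `ã` over
`{y ≥ a}` gives the Karush–Kuhn–Tucker conditions `λ ≥ 0` and `ã_I = a_I`. Substitute
`w = u ã + c + (u⁻¹ x_I, -x_J)`: the Jacobian is `u^{-|I|}`, and since `λ_J = 0` the cross term of
the quadratic form around `u ã + c` is exactly `⟨λ_I, x_I⟩` plus a term that does not grow with
`u`. The probability thus becomes `u^{-|I|} φ(u ã + c)` times an integral whose integrand converges
pointwise to `1{x_I > 0, x_U < 0} exp(-⟨λ_I, x_I⟩ - x_Jᵀ A_JJ x_J / 2 + ⟨(A c)_J, x_J⟩)` (the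
constraint `x_j < u (ã_j - a_j)` disappears for `j ∈ J \ U`) and, by coercivity of `A`, is
dominated by a Gaussian in `x_J` times decaying exponentials in `x_I`. The limit integral factors
as `∏_I λ_i⁻¹` times the truncated Gaussian integral over `J`.
-/

section QuadraticForm

variable {ι : Type*} [Fintype ι] {A : Matrix ι ι ℝ}

lemma Matrix.IsHermitian.dotProduct_mulVec_comm (hA : A.IsHermitian) (x y : ι → ℝ) :
    x ⬝ᵥ A *ᵥ y = y ⬝ᵥ A *ᵥ x := by
  rw [dotProduct_mulVec, dotProduct_comm, ← mulVec_transpose,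
    ← conjTranspose_eq_transpose_of_trivial, hA]

lemma Matrix.IsHermitian.dotProduct_mulVec_add_add (hA : A.IsHermitian) (x y : ι → ℝ) :
    (x + y) ⬝ᵥ A *ᵥ (x + y) = x ⬝ᵥ A *ᵥ x + 2 * (x ⬝ᵥ A *ᵥ y) + y ⬝ᵥ A *ᵥ y := by
  rw [mulVec_add, add_dotProduct, dotProduct_add, dotProduct_add, hA.dotProduct_mulVec_comm y x]
  ring

lemma Matrix.IsHermitian.dotProduct_mulVec_add_single [DecidableEq ι] (hA : A.IsHermitian)
    (x : ι → ℝ) (i : ι) (t : ℝ) :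
    (x + Pi.single i t) ⬝ᵥ A *ᵥ (x + Pi.single i t) =
      x ⬝ᵥ A *ᵥ x + 2 * t * (A *ᵥ x) i + t ^ 2 * A i i := by
  rw [hA.dotProduct_mulVec_add_add, hA.dotProduct_mulVec_comm x (Pi.single i t)]
  simp only [single_dotProduct, mulVec, dotProduct_single]
  ring

lemma Matrix.PosDef.exists_mul_dotProduct_self_le (hA : A.PosDef) :
    ∃ α > 0, ∀ x : ι → ℝ, α * (x ⬝ᵥ x) ≤ x ⬝ᵥ A *ᵥ x := by
  obtain hι | hι := isEmpty_or_nonempty ι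
  · exact ⟨1, one_pos, fun x => by simp [Subsingleton.elim x 0]⟩
  let q : EuclideanSpace ℝ ι → ℝ := fun y => y.ofLp ⬝ᵥ A *ᵥ y.ofLp
  obtain ⟨y₀, hy₀, hmin⟩ := (isCompact_sphere (0 : EuclideanSpace ℝ ι) 1).exists_isMinOn
    (NormedSpace.sphere_nonempty.2 zero_le_one) (by fun_prop : Continuous q).continuousOn
  have hy₀ne : y₀.ofLp ≠ 0 := fun h => by
    simp [show y₀ = 0 from WithLp.ofLp_injective 2 h] at hy₀
  refine ⟨q y₀, by simpa using hA.dotProduct_mulVec_pos hy₀ne, fun x => ?_⟩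
  rcases eq_or_ne x 0 with rfl | hx
  · simp
  set r := ‖WithLp.toLp 2 x‖
  have hr : 0 < r := norm_pos_iff.2 (by simpa using hx)
  have hr2 : x ⬝ᵥ x = r ^ 2 := by
    rw [EuclideanSpace.real_norm_sq_eq]
    simp [dotProduct, sq]
  have hmem : r⁻¹ • WithLp.toLp 2 x ∈ Metric.sphere 0 1 := by
    simp [norm_smul, r, hr.ne']
  have h := isMinOn_iff.1 hmin _ hmem
  simp only [q, WithLp.ofLp_smul, mulVec_smul, dotProduct_smul, smul_dotProduct,
    smul_eq_mul] at h
  calc q y₀ * (x ⬝ᵥ x) ≤ r⁻¹ * (r⁻¹ * (x ⬝ᵥ A *ᵥ x)) * r ^ 2 := by rw [hr2]; gcongr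
    _ = x ⬝ᵥ A *ᵥ x := by field_simp

lemma integrable_exp_dotProduct_sub_mul_dotProduct_self {α : ℝ} (hα : 0 < α) (b : ι → ℝ) :
    Integrable (fun x : ι → ℝ => Real.exp (b ⬝ᵥ x - α * (x ⬝ᵥ x))) := by
  have hprod : ∀ x : ι → ℝ, Real.exp (b ⬝ᵥ x - α * (x ⬝ᵥ x)) =
      ∏ i, Real.exp ((b i) ^ 2 / (4 * α)) * Real.exp (-α * (x i - b i / (2 * α)) ^ 2) := by
    intro x
    simp only [← Real.exp_add, ← Real.exp_sum, dotProduct, Finset.mul_sum,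
      ← Finset.sum_sub_distrib]
    congr 1
    refine Finset.sum_congr rfl fun i _ => ?_
    field_simp
    ring
  simp only [hprod]
  exact Integrable.fintype_prod fun i =>
    ((integrable_exp_neg_mul_sq hα).comp_sub_right _).const_mul _

lemma Matrix.PosDef.integrable_exp_neg_dotProduct_mulVec_add (hA : A.PosDef) (b : ι → ℝ) :
    Integrable (fun x : ι → ℝ => Real.exp (-(x ⬝ᵥ A *ᵥ x) / 2 + b ⬝ᵥ x)) := by
  obtain ⟨α, hα, hαA⟩ := hA.exists_mul_dotProduct_self_le
  refine (integrable_exp_dotProduct_sub_mul_dotProduct_self (half_pos hα) b).mono'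
    (by fun_prop) (ae_of_all _ fun x => ?_)
  rw [Real.norm_eq_abs, abs_of_pos (Real.exp_pos _), Real.exp_le_exp]
  linarith [hαA x]

lemma Matrix.PosDef.integral_indicator_exp_pos (hA : A.PosDef) (b : ι → ℝ)
    {O : Set (ι → ℝ)} (hO : IsOpen O) (hne : O.Nonempty) :
    0 < ∫ x, O.indicator (fun x => Real.exp (-(x ⬝ᵥ A *ᵥ x) / 2 + b ⬝ᵥ x)) x := by
  have hint := (hA.integrable_exp_neg_dotProduct_mulVec_add b).indicator hO.measurableSet
  rw [integral_pos_iff_support_of_nonneg (indicator_nonneg fun _ _ => (Real.exp_pos _).le) hint]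
  refine (hO.measure_pos volume hne).trans_le (measure_mono fun x hx => ?_)
  simp [hx, (Real.exp_pos _).ne']

noncomputable def truncatedGaussianIntegral (M : Matrix ι ι ℝ)
    (b : ι → ℝ) (p : ι → Prop) : ℝ :=
  ∫ y, {y : ι → ℝ | ∀ k, p k → y k < 0}.indicator
    (fun y => Real.exp (-(y ⬝ᵥ M *ᵥ y) / 2 + b ⬝ᵥ y)) y

lemma Matrix.PosDef.truncatedGaussianIntegral_pos (hA : A.PosDef) (b : ι → ℝ) (p : ι → Prop) :
    0 < truncatedGaussianIntegral A b p := by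
  refine hA.integral_indicator_exp_pos b ?_ ⟨fun _ => -1, fun _ _ => neg_one_lt_zero⟩
  simp only [ofPred_forall]
  refine isOpen_iInter_of_finite fun k => ?_
  by_cases hk : p k
  · simpa [hk] using isOpen_lt (continuous_apply k) continuous_const
  · simp [hk]

end QuadraticForm

lemma nonneg_of_forall_two_mul_add_sq_nonneg {l q δ : ℝ} (hq : 0 < q) (hδ : 0 < δ)
    (h : ∀ t, 0 < t → t ≤ δ → 0 ≤ 2 * t * l + t ^ 2 * q) : 0 ≤ l := by
  by_contra! hl
  set t := min δ (-l / q)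
  have ht : 0 < t := lt_min hδ (div_pos (neg_pos.2 hl) hq)
  have htq : t * q ≤ -l := (le_div_iff₀ hq).1 (min_le_right _ _)
  nlinarith [h t ht (min_le_left _ _), mul_le_mul_of_nonneg_left htq ht.le]

section Minimizer

variable {ι : Type*} [Fintype ι] [DecidableEq ι] {A : Matrix ι ι ℝ} {a x : ι → ℝ}

lemma Matrix.PosDef.mulVec_nonneg_of_isMin (hA : A.PosDef) (hx : a ≤ x)
    (hmin : ∀ y, a ≤ y → x ⬝ᵥ A *ᵥ x ≤ y ⬝ᵥ A *ᵥ y) (i : ι) : 0 ≤ (A *ᵥ x) i := by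
  refine nonneg_of_forall_two_mul_add_sq_nonneg (hA.diag_pos (i := i)) one_pos fun t ht _ => ?_
  have h := hmin (x + Pi.single i t) (le_add_of_le_of_nonneg hx (Pi.single_nonneg.2 ht.le))
  rw [hA.isHermitian.dotProduct_mulVec_add_single] at h
  linarith

lemma Matrix.PosDef.eq_of_mulVec_pos_of_isMin (hA : A.PosDef) (hx : a ≤ x)
    (hmin : ∀ y, a ≤ y → x ⬝ᵥ A *ᵥ x ≤ y ⬝ᵥ A *ᵥ y) {i : ι} (hi : 0 < (A *ᵥ x) i) :
    x i = a i := by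
  by_contra hne
  have hslack : 0 < x i - a i := sub_pos.2 ((hx i).lt_of_ne (Ne.symm hne))
  suffices 0 ≤ -(A *ᵥ x) i by linarith
  refine nonneg_of_forall_two_mul_add_sq_nonneg (hA.diag_pos (i := i)) hslack fun t ht hts => ?_
  have hfeas : a ≤ x + Pi.single i (-t) := fun k => by
    rcases eq_or_ne k i with rfl | hk
    · simp only [Pi.add_apply, Pi.single_eq_same]
      linarith
    · simpa [Pi.single_eq_of_ne hk] using hx k
  have h := hmin _ hfeas
  rw [hA.isHermitian.dotProduct_mulVec_add_single] at h
  linarith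

end Minimizer

section Integrals

variable {ι : Type*} [Fintype ι] [DecidableEq ι]

lemma integral_comp_mul_add {σ : ι → ℝ} (hσ : ∀ i, σ i ≠ 0) (m : ι → ℝ)
    (g : (ι → ℝ) → ℝ) : ∫ x, g (σ * x + m) = |∏ i, σ i|⁻¹ * ∫ w, g w := by
  let e : (ι → ℝ) ≃ᵐ (ι → ℝ) :=
    MeasurableEquiv.piCongrRight fun i => MeasurableEquiv.mulLeft₀ (σ i) (hσ i)
  have hdet : (diagonal σ).det ≠ 0 := by
    simpa [det_diagonal] using Finset.prod_ne_zero_iff.2 fun i _ => hσ i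
  have hmap : Measure.map e volume = ENNReal.ofReal |(∏ i, σ i)⁻¹| • volume := by
    rw [← det_diagonal, ← Real.map_matrix_volume_pi_eq_smul_volume_pi hdet]
    congr 1
    ext x i
    simp only [toLin'_apply, mulVec_diagonal]
    rfl
  calc ∫ x, g (σ * x + m) = ∫ y, g (y + m) ∂(Measure.map e volume) :=
        (e.measurableEmbedding.integral_map (fun y => g (y + m))).symm
    _ = |∏ i, σ i|⁻¹ * ∫ w, g w := by
        rw [hmap, integral_smul_measure, integral_add_right_eq_self g m,
          ENNReal.toReal_ofReal (abs_nonneg _), abs_inv, smul_eq_mul]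

lemma integral_mul_eq_integral_mul_integral_subtype (J : Finset ι)
    (F : ({j // j ∈ J} → ℝ) → ℝ) (G : ({i // i ∉ J} → ℝ) → ℝ) :
    ∫ x : ι → ℝ, F (fun j => x j) * G (fun i => x i) = (∫ y, F y) * ∫ z, G z := by
  have h := (volume_preserving_piEquivPiSubtypeProd (fun _ : ι => ℝ)
    (· ∈ J)).integral_comp' (fun y => F y.1 * G y.2)
  rw [Measure.volume_eq_prod, integral_prod_mul,
    Subsingleton.elim (Subtype.fintype (· ∈ J)) (Finset.Subtype.fintype J)] at h
  exact h

lemma integral_indicator_Ioi_exp_neg_mul {l : ℝ} (hl : 0 < l) :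
    ∫ t, (Ioi 0).indicator (fun t => Real.exp (-(l * t))) t = l⁻¹ := by
  rw [integral_indicator measurableSet_Ioi]
  have h := integral_comp_mul_left_Ioi (fun t => Real.exp (-t)) 0 hl
  rwa [mul_zero, integral_exp_neg_Ioi_zero, smul_eq_mul, mul_one] at h

end Integrals

section Restriction

variable {ι : Type*} [Fintype ι] {J : Finset ι} {z : ι → ℝ}

lemma dotProduct_eq_dotProduct_restrict (hz : ∀ i ∉ J, z i = 0) (b : ι → ℝ) :
    b ⬝ᵥ z = (fun j : J => b j) ⬝ᵥ (fun j : J => z j) := by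
  simp only [dotProduct]
  rw [Finset.sum_coe_sort J fun i => b i * z i,
    Finset.sum_subset (Finset.subset_univ J) fun i _ hi => by simp [hz i hi]]

lemma dotProduct_mulVec_eq_submatrix_restrict (hz : ∀ i ∉ J, z i = 0) (A : Matrix ι ι ℝ) :
    z ⬝ᵥ A *ᵥ z =
      (fun j : J => z j) ⬝ᵥ A.submatrix (↑) (↑) *ᵥ (fun j : J => z j) := by
  rw [dotProduct_comm, dotProduct_eq_dotProduct_restrict hz, dotProduct_comm]
  congr 1
  funext j
  exact dotProduct_eq_dotProduct_restrict hz _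

end Restriction

section Rescaling

variable {ι : Type*} [DecidableEq ι] (J : Finset ι)

/-- The diagonal of the substitution `w = u • ta + c + rescaling J u⁻¹ * x`. -/
def rescaling (ε : ℝ) : ι → ℝ := fun i => if i ∈ J then -1 else ε

def rescaledDomain (gap : ι → ℝ) (u : ℝ) : Set (ι → ℝ) :=
  {x | ∀ i, if i ∈ J then x i < u * gap i else 0 < x i}

def limitDomain (U : Finset ι) : Set (ι → ℝ) :=
  {x | ∀ i, if i ∈ J then (i ∈ U → x i < 0) else 0 < x i}

variable {J}

lemma rescaling_mul_add_mem_iff {a c ta : ι → ℝ} (hta : ∀ i ∉ J, ta i = a i) {u : ℝ} (hu : 0 < u)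
    (x : ι → ℝ) :
    rescaling J u⁻¹ * x + (u • ta + c) ∈ {w | ∀ i, u * a i + c i < w i} ↔
      x ∈ rescaledDomain J (ta - a) u := by
  refine forall_congr' fun i => ?_
  by_cases hi : i ∈ J
  · simp only [rescaling, hi, if_true, Pi.add_apply, Pi.mul_apply, Pi.smul_apply, smul_eq_mul,
      Pi.sub_apply]
    constructor <;> intro h <;> linarith
  · simp only [rescaling, hi, if_false, Pi.add_apply, Pi.mul_apply, Pi.smul_apply, smul_eq_mul,
      hta i hi, lt_add_iff_pos_left]
    exact ⟨fun h => pos_of_mul_pos_right h (inv_pos.2 hu).le, mul_pos (inv_pos.2 hu)⟩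

lemma continuous_rescaling : Continuous (rescaling (ι := ι) J) :=
  continuous_pi fun i => by
    by_cases hi : i ∈ J <;> simp [rescaling, hi, continuous_const, continuous_id']

variable [Fintype ι]

/-- `-(wᵀ A w - mᵀ A m) / 2` at `w = m + rescaling J u⁻¹ * x`, `m = u • ta + c`, written with
`ε = u⁻¹` so that it extends continuously to `ε = 0`. -/
noncomputable def rescaledExponent (A : Matrix ι ι ℝ) (J : Finset ι) (lam c : ι → ℝ) (ε : ℝ)
    (x : ι → ℝ) : ℝ :=
  -(∑ i ∈ Jᶜ, lam i * x i) - (A *ᵥ c) ⬝ᵥ (rescaling J ε * x)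
    - (rescaling J ε * x) ⬝ᵥ A *ᵥ (rescaling J ε * x) / 2

variable {A : Matrix ι ι ℝ} {lam c : ι → ℝ}

lemma abs_prod_rescaling (ε : ℝ) : |∏ i, rescaling J ε i| = |ε| ^ Jᶜ.card := by
  rw [Finset.abs_prod, ← Finset.prod_compl_mul_prod J,
    Finset.prod_eq_one (s := J) fun i hi => by simp [rescaling, hi], mul_one, ← Finset.prod_const]
  exact Finset.prod_congr rfl fun i hi => by simp [rescaling, Finset.mem_compl.1 hi]

lemma rescaling_mul_dotProduct (hlamJ : ∀ j ∈ J, lam j = 0) (ε : ℝ) (x : ι → ℝ) :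
    (rescaling J ε * x) ⬝ᵥ lam = ε * ∑ i ∈ Jᶜ, lam i * x i := by
  rw [dotProduct, ← Finset.sum_compl_add_sum J,
    Finset.sum_eq_zero (s := J) fun j hj => by simp [hlamJ j hj], add_zero, Finset.mul_sum]
  refine Finset.sum_congr rfl fun i hi => ?_
  simp [rescaling, Finset.mem_compl.1 hi]
  ring

/-- The cross term `u (rescaling J u⁻¹ * x)ᵀ A ta` is `∑ i ∉ J, lam i * x i`, with no power of
`u` left, because the multiplier `lam = A ta` vanishes on `J`. -/
lemma neg_dotProduct_mulVec_rescaling_mul_add (hA : A.IsHermitian) {ta : ι → ℝ}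
    (hlam : A *ᵥ ta = lam) (hlamJ : ∀ j ∈ J, lam j = 0) {u : ℝ} (hu : u ≠ 0) (x : ι → ℝ) :
    -((rescaling J u⁻¹ * x + (u • ta + c)) ⬝ᵥ A *ᵥ (rescaling J u⁻¹ * x + (u • ta + c))) / 2 =
      -((u • ta + c) ⬝ᵥ A *ᵥ (u • ta + c)) / 2 + rescaledExponent A J lam c u⁻¹ x := by
  have hcross : (rescaling J u⁻¹ * x) ⬝ᵥ A *ᵥ (u • ta + c) =
      ∑ i ∈ Jᶜ, lam i * x i + (A *ᵥ c) ⬝ᵥ (rescaling J u⁻¹ * x) := by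
    rw [mulVec_add, mulVec_smul, hlam, dotProduct_add, dotProduct_smul,
      rescaling_mul_dotProduct hlamJ, smul_eq_mul, ← mul_assoc, mul_inv_cancel₀ hu, one_mul,
      dotProduct_comm (A *ᵥ c)]
  rw [hA.dotProduct_mulVec_add_add, hcross, rescaledExponent]
  ring

lemma integral_orthant_exp_eq {a ta : ι → ℝ} (hA : A.IsHermitian) (hlam : A *ᵥ ta = lam)
    (hlamJ : ∀ j ∈ J, lam j = 0) (hta : ∀ i ∉ J, ta i = a i) {u : ℝ} (hu : 0 < u) :
    ∫ w in {w | ∀ i, u * a i + c i < w i}, Real.exp (-(w ⬝ᵥ A *ᵥ w) / 2) =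
      u ^ (-(Jᶜ.card : ℝ)) * Real.exp (-((u • ta + c) ⬝ᵥ A *ᵥ (u • ta + c)) / 2) *
        ∫ x, (rescaledDomain J (ta - a) u).indicator
          (fun x => Real.exp (rescaledExponent A J lam c u⁻¹ x)) x := by
  set O := {w : ι → ℝ | ∀ i, u * a i + c i < w i}
  have hO : MeasurableSet O := by
    simp only [O, ofPred_forall]
    exact MeasurableSet.iInter fun i => measurableSet_lt measurable_const (measurable_pi_apply i)
  have hσ : ∀ i, rescaling J u⁻¹ i ≠ 0 := fun i => by
    by_cases hi : i ∈ J <;> simp [rescaling, hi, hu.ne']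
  have hpt : ∀ x, O.indicator (fun w => Real.exp (-(w ⬝ᵥ A *ᵥ w) / 2))
      (rescaling J u⁻¹ * x + (u • ta + c)) =
        Real.exp (-((u • ta + c) ⬝ᵥ A *ᵥ (u • ta + c)) / 2) *
          (rescaledDomain J (ta - a) u).indicator
            (fun x => Real.exp (rescaledExponent A J lam c u⁻¹ x)) x := fun x => by
    by_cases hx : x ∈ rescaledDomain J (ta - a) u
    · rw [indicator_of_mem ((rescaling_mul_add_mem_iff hta hu x).2 hx), indicator_of_mem hx,
        neg_dotProduct_mulVec_rescaling_mul_add hA hlam hlamJ hu.ne', Real.exp_add]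
    · rw [indicator_of_notMem (mt (rescaling_mul_add_mem_iff hta hu x).1 hx),
        indicator_of_notMem hx, mul_zero]
  have hcov := integral_comp_mul_add hσ (u • ta + c)
    (O.indicator fun w => Real.exp (-(w ⬝ᵥ A *ᵥ w) / 2))
  rw [abs_prod_rescaling, abs_of_pos (inv_pos.2 hu), integral_indicator hO] at hcov
  simp only [hpt, integral_const_mul] at hcov
  rw [Real.rpow_neg hu.le, Real.rpow_natCast, ← inv_pow, mul_assoc, hcov, ← mul_assoc,
    mul_inv_cancel₀ (by positivity), one_mul]

lemma continuous_rescaledExponent :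
    Continuous fun p : ℝ × (ι → ℝ) => rescaledExponent A J lam c p.1 p.2 := by
  have h : Continuous fun p : ℝ × (ι → ℝ) => rescaling J p.1 * p.2 :=
    (continuous_rescaling.comp continuous_fst).mul continuous_snd
  unfold rescaledExponent
  fun_prop

lemma measurableSet_rescaledDomain (gap : ι → ℝ) (u : ℝ) :
    MeasurableSet (rescaledDomain J gap u) := by
  simp only [rescaledDomain, ofPred_forall]
  exact .iInter fun i => by split_ifs <;> exact measurableSet_lt (by fun_prop) (by fun_prop)

lemma eventually_mem_rescaledDomain_iff {gap : ι → ℝ} {U : Finset ι}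
    (hgap : ∀ j ∈ J, 0 ≤ gap j) (hU : ∀ j ∈ J, j ∈ U ↔ gap j = 0) (x : ι → ℝ) :
    ∀ᶠ u in atTop, x ∈ rescaledDomain J gap u ↔ x ∈ limitDomain J U := by
  have h : ∀ i, ∀ᶠ u : ℝ in atTop, ((if i ∈ J then x i < u * gap i else 0 < x i) ↔
      (if i ∈ J then (i ∈ U → x i < 0) else 0 < x i)) := fun i => by
    by_cases hi : i ∈ J
    · simp only [hi, if_true, hU i hi]
      rcases (hgap i hi).eq_or_lt with h0 | hpos
      · simp [← h0]
      · filter_upwards [(tendsto_id.atTop_mul_const hpos).eventually_gt_atTop (x i)] with u hu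
        simpa [hpos.ne'] using hu
    · simp [hi]
  filter_upwards [eventually_all.2 h] with u hu
  exact forall_congr' hu

lemma rescaledExponent_le (hA : A.IsHermitian) {α : ℝ} (hα : 0 ≤ α)
    (hαA : ∀ y, α * (y ⬝ᵥ y) ≤ y ⬝ᵥ A *ᵥ y) (ε : ℝ) (x : ι → ℝ) :
    rescaledExponent A J lam c ε x ≤ c ⬝ᵥ A *ᵥ c / 2 +
      ∑ i, if i ∈ J then -(α / 2 * (x i - c i) ^ 2) else -(lam i * x i) := by
  set v := rescaling J ε * x
  have hsq : -((A *ᵥ c) ⬝ᵥ v) - v ⬝ᵥ A *ᵥ v / 2 =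
      c ⬝ᵥ A *ᵥ c / 2 - (v + c) ⬝ᵥ A *ᵥ (v + c) / 2 := by
    rw [hA.dotProduct_mulVec_add_add, dotProduct_comm (A *ᵥ c)]
    ring
  have hJ : ∑ j ∈ J, (x j - c j) ^ 2 ≤ (v + c) ⬝ᵥ (v + c) :=
    calc ∑ j ∈ J, (x j - c j) ^ 2 = ∑ j ∈ J, (v + c) j * (v + c) j :=
          Finset.sum_congr rfl fun j hj => by simp [v, rescaling, hj]; ring
      _ ≤ (v + c) ⬝ᵥ (v + c) :=
          Finset.sum_le_sum_of_subset_of_nonneg (Finset.subset_univ J)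
            fun i _ _ => mul_self_nonneg _
  have hsplit : (∑ i, if i ∈ J then -(α / 2 * (x i - c i) ^ 2) else -(lam i * x i)) =
      -(α / 2 * ∑ j ∈ J, (x j - c j) ^ 2) - ∑ i ∈ Jᶜ, lam i * x i := by
    rw [← Finset.sum_compl_add_sum J,
      Finset.sum_congr rfl fun i hi => if_neg (Finset.mem_compl.1 hi),
      Finset.sum_congr rfl fun i hi => if_pos hi, Finset.sum_neg_distrib,
      Finset.sum_neg_distrib, Finset.mul_sum]
    ring
  rw [hsplit, rescaledExponent]
  nlinarith [hαA (v + c), mul_le_mul_of_nonneg_left hJ hα]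

lemma integrable_prod_ite_exp (hlam : ∀ i ∉ J, 0 < lam i) {α : ℝ} (hα : 0 < α) (c : ι → ℝ) :
    Integrable fun x : ι → ℝ => ∏ i, if i ∈ J then Real.exp (-(α / 2 * (x i - c i) ^ 2))
      else (Ioi 0).indicator (fun t => Real.exp (-(lam i * t))) (x i) := by
  refine Integrable.fintype_prod (f := fun i t => if i ∈ J then Real.exp (-(α / 2 * (t - c i) ^ 2))
    else (Ioi 0).indicator (fun t => Real.exp (-(lam i * t))) t) fun i => ?_
  by_cases hi : i ∈ J
  · simpa [hi, neg_mul] using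
      (integrable_exp_neg_mul_sq (half_pos hα)).comp_sub_right (c i)
  · simpa [hi, integrable_indicator_iff measurableSet_Ioi, neg_mul] using
      exp_neg_integrableOn_Ioi 0 (hlam i hi)

lemma norm_indicator_exp_rescaledExponent_le (hA : A.IsHermitian) {α : ℝ} (hα : 0 ≤ α)
    (hαA : ∀ y, α * (y ⬝ᵥ y) ≤ y ⬝ᵥ A *ᵥ y) (gap : ι → ℝ) (u : ℝ) (x : ι → ℝ) :
    ‖(rescaledDomain J gap u).indicator
        (fun x => Real.exp (rescaledExponent A J lam c u⁻¹ x)) x‖ ≤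
      Real.exp (c ⬝ᵥ A *ᵥ c / 2) * ∏ i, if i ∈ J then Real.exp (-(α / 2 * (x i - c i) ^ 2))
        else (Ioi 0).indicator (fun t => Real.exp (-(lam i * t))) (x i) := by
  by_cases hx : x ∈ rescaledDomain J gap u
  · rw [indicator_of_mem hx, Real.norm_eq_abs, abs_of_pos (Real.exp_pos _)]
    refine (Real.exp_le_exp.2 (rescaledExponent_le hA hα hαA u⁻¹ x)).trans_eq ?_
    rw [Real.exp_add, Real.exp_sum]
    refine congrArg _ (Finset.prod_congr rfl fun i _ => ?_)
    by_cases hi : i ∈ J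
    · simp [hi]
    · have := hx i
      simp only [hi, if_false] at this ⊢
      rw [indicator_of_mem (mem_Ioi.2 this)]
  · rw [indicator_of_notMem hx, norm_zero]
    exact mul_nonneg (Real.exp_pos _).le (Finset.prod_nonneg fun i _ => by
      split_ifs
      exacts [(Real.exp_pos _).le, indicator_nonneg (fun _ _ => (Real.exp_pos _).le) _])

lemma tendsto_integral_rescaled (hA : A.PosDef) (hlam : ∀ i ∉ J, 0 < lam i) {gap : ι → ℝ}
    {U : Finset ι} (hgap : ∀ j ∈ J, 0 ≤ gap j) (hU : ∀ j ∈ J, j ∈ U ↔ gap j = 0) :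
    Tendsto (fun u => ∫ x, (rescaledDomain J gap u).indicator
        (fun x => Real.exp (rescaledExponent A J lam c u⁻¹ x)) x) atTop
      (𝓝 (∫ x, (limitDomain J U).indicator
        (fun x => Real.exp (rescaledExponent A J lam c 0 x)) x)) := by
  obtain ⟨α, hα, hαA⟩ := hA.exists_mul_dotProduct_self_le
  have hcont := continuous_rescaledExponent (A := A) (J := J) (lam := lam) (c := c)
  refine tendsto_integral_filter_of_dominated_convergence _ (.of_forall fun u => ?_)
    (.of_forall fun u => ae_of_all _ fun x => ?_)
    ((integrable_prod_ite_exp hlam hα c).const_mul (Real.exp (c ⬝ᵥ A *ᵥ c / 2)))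
    (ae_of_all _ fun x => ?_)
  · exact ((hcont.comp (Continuous.prodMk_right u⁻¹)).rexp.measurable.indicator
      (measurableSet_rescaledDomain gap u)).aestronglyMeasurable
  · exact norm_indicator_exp_rescaledExponent_le hA.isHermitian hα.le hαA gap u x
  · have hexp : Tendsto (fun u : ℝ => Real.exp (rescaledExponent A J lam c u⁻¹ x)) atTop
        (𝓝 (Real.exp (rescaledExponent A J lam c 0 x))) :=
      (((hcont.comp (Continuous.prodMk_left x)).tendsto 0).comp tendsto_inv_atTop_zero).rexp
    have hmem := eventually_mem_rescaledDomain_iff hgap hU x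
    by_cases hx : x ∈ limitDomain J U
    · rw [indicator_of_mem hx]
      refine hexp.congr' ?_
      filter_upwards [hmem] with u hu
      rw [indicator_of_mem (hu.2 hx)]
    · rw [indicator_of_notMem hx]
      refine tendsto_const_nhds.congr' ?_
      filter_upwards [hmem] with u hu
      rw [indicator_of_notMem (mt hu.1 hx)]

lemma rescaledExponent_zero (x : ι → ℝ) :
    rescaledExponent A J lam c 0 x = -(∑ i ∈ Jᶜ, lam i * x i) +
      (-((fun j : J => x j) ⬝ᵥ A.submatrix (↑) (↑) *ᵥ (fun j : J => x j)) / 2 +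
        ∑ j : J, (A *ᵥ c) j * x j) := by
  have hz : ∀ i ∉ J, (rescaling J 0 * x) i = 0 := fun i hi => by simp [rescaling, hi]
  have hJ : (fun j : J => (rescaling J 0 * x) j) = -fun j : J => x j := by
    funext j
    simp [rescaling, j.2]
  rw [rescaledExponent, dotProduct_eq_dotProduct_restrict hz,
    dotProduct_mulVec_eq_submatrix_restrict hz, hJ, mulVec_neg, dotProduct_neg, neg_dotProduct,
    dotProduct_neg, neg_neg]
  simp only [dotProduct]
  ring

lemma limitDomain_indicator_eq_mul (U : Finset ι) (x : ι → ℝ) :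
    (limitDomain J U).indicator (fun x => Real.exp (rescaledExponent A J lam c 0 x)) x =
      {y : J → ℝ | ∀ j : J, j.1 ∈ U → y j < 0}.indicator
          (fun y => Real.exp (-(y ⬝ᵥ A.submatrix (↑) (↑) *ᵥ y) / 2 + ∑ j : J, (A *ᵥ c) j * y j))
          (fun j => x j) *
        ∏ i : {i // i ∉ J}, (Ioi 0).indicator (fun t => Real.exp (-(lam i * t))) (x i) := by
  by_cases hx : x ∈ limitDomain J U
  · have hU : (fun j : J => x j) ∈ {y : J → ℝ | ∀ j : J, j.1 ∈ U → y j < 0} := fun j hj => by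
      simpa [j.2, hj] using hx j
    have hpos : ∀ i : {i // i ∉ J}, x i ∈ Ioi 0 := fun i => by simpa [i.2] using hx i
    rw [indicator_of_mem hx, indicator_of_mem hU, rescaledExponent_zero, Real.exp_add,
      mul_comm, Finset.prod_congr rfl fun i _ => indicator_of_mem (hpos i) _, ← Real.exp_sum,
      Finset.sum_neg_distrib, Finset.sum_subtype Jᶜ (p := (· ∉ J)) (fun i => Finset.mem_compl)]
  · rw [indicator_of_notMem hx]
    obtain ⟨i, hi⟩ := not_forall.1 hx
    by_cases hiJ : i ∈ J
    · simp only [hiJ, if_true, Classical.not_imp, not_lt] at hi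
      have : (fun j : J => x j) ∉ {y : J → ℝ | ∀ j : J, j.1 ∈ U → y j < 0} := fun h =>
        (h ⟨i, hiJ⟩ hi.1).not_ge hi.2
      rw [indicator_of_notMem this, zero_mul]
    · simp only [hiJ, if_false] at hi
      rw [Finset.prod_eq_zero (Finset.mem_univ ⟨i, hiJ⟩) (indicator_of_notMem hi _), mul_zero]

lemma integral_limitDomain_indicator (hlam : ∀ i ∉ J, 0 < lam i) (U : Finset ι) :
    ∫ x, (limitDomain J U).indicator (fun x => Real.exp (rescaledExponent A J lam c 0 x)) x =
      (∏ i ∈ Jᶜ, lam i)⁻¹ *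
        truncatedGaussianIntegral (A.submatrix (↑) (↑)) (fun j : J => (A *ᵥ c) j) (·.1 ∈ U) := by
  rw [integral_congr_ae (ae_of_all _ (limitDomain_indicator_eq_mul U)),
    integral_mul_eq_integral_mul_integral_subtype J _
      fun z => ∏ i : {i // i ∉ J}, (Ioi 0).indicator (fun t => Real.exp (-(lam i * t))) (z i),
    integral_fintype_prod_volume_eq_prod fun (i : {i // i ∉ J}) t =>
      (Ioi 0).indicator (fun t => Real.exp (-(lam i * t))) t,
    Finset.prod_congr rfl fun (i : {i // i ∉ J}) _ =>
      integral_indicator_Ioi_exp_neg_mul (hlam i i.2),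
    Finset.prod_inv_distrib, ← Finset.prod_subtype Jᶜ (p := (· ∉ J)) (fun i => Finset.mem_compl),
    mul_comm]
  rfl

lemma integral_limitDomain_indicator_pos (hA : A.PosDef) (hlam : ∀ i ∉ J, 0 < lam i)
    (U : Finset ι) :
    0 < ∫ x, (limitDomain J U).indicator
      (fun x => Real.exp (rescaledExponent A J lam c 0 x)) x := by
  rw [integral_limitDomain_indicator hlam]
  exact mul_pos (inv_pos.2 (Finset.prod_pos fun i hi => hlam i (Finset.mem_compl.1 hi)))
    ((hA.submatrix Subtype.val_injective).truncatedGaussianIntegral_pos _ _)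

end Rescaling

theorem tendsto_integral_orthant_exp_div {ι : Type*} [Fintype ι] [DecidableEq ι]
    {A : Matrix ι ι ℝ} (hA : A.PosDef) {a ta : ι → ℝ} (hta : a ≤ ta)
    (hmin : ∀ y, a ≤ y → ta ⬝ᵥ A *ᵥ ta ≤ y ⬝ᵥ A *ᵥ y) (c : ι → ℝ) {J U : Finset ι}
    (hJ : ∀ i, i ∈ J ↔ ¬ 0 < (A *ᵥ ta) i) (hU : ∀ i, i ∈ U ↔ (i ∈ J ∧ ta i = a i)) :
    Tendsto (fun u : ℝ =>
      (∫ w in {w | ∀ i, u * a i + c i < w i}, Real.exp (-(w ⬝ᵥ A *ᵥ w) / 2)) /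
        (u ^ (-(Jᶜ.card : ℝ)) * Real.exp (-((u • ta + c) ⬝ᵥ A *ᵥ (u • ta + c)) / 2) /
          (∏ i ∈ Jᶜ, (A *ᵥ ta) i) *
          truncatedGaussianIntegral (A.submatrix (↑) (↑)) (fun j : J => (A *ᵥ c) j) (·.1 ∈ U)))
      atTop (𝓝 1) := by
  have hlamJ : ∀ j ∈ J, (A *ᵥ ta) j = 0 := fun j hj =>
    (not_lt.1 ((hJ j).1 hj)).antisymm (hA.mulVec_nonneg_of_isMin hta hmin j)
  have hlam : ∀ i ∉ J, 0 < (A *ᵥ ta) i := fun i hi => not_not.1 (mt (hJ i).2 hi)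
  have hL := integral_limitDomain_indicator_pos (c := c) hA hlam U
  have hlim := tendsto_integral_rescaled (c := c) hA hlam (gap := ta - a) (U := U)
    (fun j _ => sub_nonneg.2 (hta j)) (fun j hj => by simp [hU, hj, sub_eq_zero])
  rw [integral_limitDomain_indicator hlam] at hlim hL
  have hratio := hlim.div tendsto_const_nhds hL.ne'
  rw [div_self hL.ne'] at hratio
  refine hratio.congr' ?_
  filter_upwards [eventually_gt_atTop 0] with u hu
  rw [Pi.div_apply, integral_orthant_exp_eq hA.isHermitian rfl hlamJ
    (fun i hi => hA.eq_of_mulVec_pos_of_isMin hta hmin (hlam i hi)) hu]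
  have : 0 < u ^ (-(Jᶜ.card : ℝ)) * Real.exp (-((u • ta + c) ⬝ᵥ A *ᵥ (u • ta + c)) / 2) := by
    positivity
  field_simp

theorem stmt3_general {d : ℕ}
    (S : Matrix (Fin d) (Fin d) ℝ) (hS : S.PosDef)
    (c a : Fin d → ℝ)
    (φ : (Fin d → ℝ) → ℝ)
    (hφ : ∀ x, φ x = (2 * Real.pi) ^ (-(d : ℝ) / 2) * S.det ^ (-(1 : ℝ) / 2) *
        Real.exp (-(x ⬝ᵥ S⁻¹ *ᵥ x) / 2))
    (ta : Fin d → ℝ)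
    (hta : (∀ i, a i ≤ ta i) ∧
      ∀ y : Fin d → ℝ, (∀ i, a i ≤ y i) → ta ⬝ᵥ S⁻¹ *ᵥ ta ≤ y ⬝ᵥ S⁻¹ *ᵥ y)
    (lam : Fin d → ℝ) (hlam : lam = S⁻¹ *ᵥ ta)
    (I J U : Finset (Fin d))
    (hI : ∀ i, i ∈ I ↔ 0 < lam i)
    (hJ : ∀ i, i ∈ J ↔ ¬ 0 < lam i)
    (hU : ∀ i, i ∈ U ↔ (i ∈ J ∧ ta i = a i)) :
    Tendsto (fun u : ℝ =>
      (∫ w in {w : Fin d → ℝ | ∀ i, u * a i + c i < w i}, φ w) /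
      (u ^ (-(I.card : ℝ)) * φ (fun i => u * ta i + c i) / (∏ i ∈ I, lam i) *
        ∫ x : {j // j ∈ J} → ℝ,
          Set.indicator {x : {j // j ∈ J} → ℝ | ∀ j : {j // j ∈ J}, j.1 ∈ U → x j < 0}
            (fun x => Real.exp
              (-(x ⬝ᵥ (Matrix.of fun p q : {j // j ∈ J} => S⁻¹ p.1 q.1) *ᵥ x) / 2 +
                ∑ j : {j // j ∈ J}, (S⁻¹ *ᵥ c) j.1 * x j)) x))
      atTop (nhds 1) := by
  subst hlam
  obtain rfl : I = Jᶜ := by ext i; simp [hI, hJ]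
  set K := (2 * Real.pi) ^ (-(d : ℝ) / 2) * S.det ^ (-(1 : ℝ) / 2)
  have hK : K ≠ 0 := by
    have := hS.det_pos
    positivity
  have hcancel : ∀ N E x y z : ℝ, K * N / (x * (K * E) / y * z) = N / (x * E / y * z) :=
    fun N E x y z => by rw [show x * (K * E) / y * z = K * (x * E / y * z) by ring,
      mul_div_mul_left _ _ hK]
  refine (tendsto_integral_orthant_exp_div hS.inv hta.1 hta.2 c hJ hU).congr fun u => ?_
  simp only [hφ, integral_const_mul, hcancel]
  rfl

/-- Lemma 4.1 of the paper. For a centered Gaussian density `φ` with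
symmetric positive definite covariance `Σ`, `c ∈ ℝ^d` and `a ∉ (-∞,0]^d`, with `ta` the
solution of `Π_Σ(a)`, `λ = Σ⁻¹ ta`, `I = {i : λ_i > 0}`, `J = Iᶜ`, `U = {i ∈ J : ta_i = a_i}`,
one has, as `u → ∞`,
`P(X - c > u a) ∼ u^{-|I|} φ(u ta + c) / ∏_{i∈I} λ_i ·
  ∫_{ℝ^{|J|}} 1{x_U < 0} exp(-½ x_J^⊤ (Σ⁻¹)_{JJ} x_J + ⟨(Σ⁻¹c)_J, x_J⟩) dx_J`. -/
theorem stmt3 {d : ℕ}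
    (S : Matrix (Fin d) (Fin d) ℝ) (hS : S.PosDef)
    (c a : Fin d → ℝ) (ha : ∃ i, 0 < a i)
    (φ : (Fin d → ℝ) → ℝ)
    (hφ : ∀ x, φ x = (2 * Real.pi) ^ (-(d : ℝ) / 2) * S.det ^ (-(1 : ℝ) / 2) *
        Real.exp (-(x ⬝ᵥ S⁻¹ *ᵥ x) / 2))
    (ta : Fin d → ℝ)
    (hta : (∀ i, a i ≤ ta i) ∧
      ∀ y : Fin d → ℝ, (∀ i, a i ≤ y i) → ta ⬝ᵥ S⁻¹ *ᵥ ta ≤ y ⬝ᵥ S⁻¹ *ᵥ y)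
    (lam : Fin d → ℝ) (hlam : lam = S⁻¹ *ᵥ ta)
    (I J U : Finset (Fin d))
    (hI : ∀ i, i ∈ I ↔ 0 < lam i)
    (hJ : ∀ i, i ∈ J ↔ ¬ 0 < lam i)
    (hU : ∀ i, i ∈ U ↔ (i ∈ J ∧ ta i = a i)) :
    Tendsto (fun u : ℝ =>
      (∫ w in {w : Fin d → ℝ | ∀ i, u * a i + c i < w i}, φ w) /
      (u ^ (-(I.card : ℝ)) * φ (fun i => u * ta i + c i) / (∏ i ∈ I, lam i) *
        ∫ x : {j // j ∈ J} → ℝ,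
          Set.indicator {x : {j // j ∈ J} → ℝ | ∀ j : {j // j ∈ J}, j.1 ∈ U → x j < 0}
            (fun x => Real.exp
              (-(x ⬝ᵥ (Matrix.of fun p q : {j // j ∈ J} => S⁻¹ p.1 q.1) *ᵥ x) / 2 +
                ∑ j : {j // j ∈ J}, (S⁻¹ *ᵥ c) j.1 * x j)) x))
      atTop (nhds 1) :=
  stmt3_general S hS c a φ hφ ta hta lam hlam I J U hI hJ hU
end

section
/- Under condition B0 (each v_i is C¹, strictly increasing, with v_i(0) = 0) and A nonsingular, the function D(t) := ã(t)^⊤ Σ(t)^{−1} ã(t) is strictly positive and strictly decreasing on (0,T]: for all 0 < t₁ < t₂ ≤ T one has 0 < D(t₂) < D(t₁). -/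
open Matrix Set

/-!
For `s < t` the increment `Σ(t) - Σ(s) = A diag(v(t) - v(s)) Aᵀ` is positive definite, and since
`xᵀS⁻¹x = max_y (2⟨x, y⟩ - yᵀSy)`, the quadratic form of `Σ(t)⁻¹` is strictly smaller than that of
`Σ(s)⁻¹` at every `x ≠ 0`. The minimiser `ã(t₁)` is nonzero (some `aᵢ > 0`) and feasible at time
`t₂`, so `D(t₂) ≤ ã(t₁)ᵀ Σ(t₂)⁻¹ ã(t₁) < D(t₁)`.
-/

namespace Matrix

variable {n : Type*} [Fintype n] [DecidableEq n]

lemma mulVec_nonsing_inv_mulVec {R : Type*} [CommRing R] {A : Matrix n n R} (hA : IsUnit A.det)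
    (x : n → R) : A *ᵥ (A⁻¹ *ᵥ x) = x := by
  rw [mulVec_mulVec, mul_nonsing_inv _ hA, one_mulVec]

lemma PosDef.mul_diagonal_mul_transpose {A : Matrix n n ℝ} (hA : IsUnit A.det) {w : n → ℝ}
    (hw : ∀ i, 0 < w i) : (A * diagonal w * Aᵀ).PosDef := by
  simpa [conjTranspose_eq_transpose_of_trivial] using
    (PosDef.diagonal hw).mul_mul_conjTranspose_same
      (vecMul_injective_iff_isUnit.mpr ((isUnit_iff_isUnit_det A).mpr hA))

lemma PosDef.two_mul_dotProduct_sub_le {S : Matrix n n ℝ} (hS : S.PosDef) (x y : n → ℝ) :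
    2 * (x ⬝ᵥ y) - y ⬝ᵥ S *ᵥ y ≤ x ⬝ᵥ S⁻¹ *ᵥ x := by
  set w := S⁻¹ *ᵥ x
  have hSw : S *ᵥ w = x := mulVec_nonsing_inv_mulVec (hS.det_pos.ne'.isUnit) x
  have hwS : w ᵥ* S = x := by
    rw [← mulVec_transpose, (isHermitian_iff_isSymm.mp hS.isHermitian).eq, hSw]
  have hyw : y ⬝ᵥ S *ᵥ w = x ⬝ᵥ y := by rw [hSw, dotProduct_comm]
  have hwy : w ⬝ᵥ S *ᵥ y = x ⬝ᵥ y := by rw [dotProduct_mulVec, hwS]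
  have hww : w ⬝ᵥ S *ᵥ w = x ⬝ᵥ w := by rw [hSw, dotProduct_comm]
  have hnonneg := hS.posSemidef.dotProduct_mulVec_nonneg (y - w)
  simp only [star_trivial, mulVec_sub, dotProduct_sub, sub_dotProduct, hyw, hwy, hww] at hnonneg
  linarith

lemma PosDef.dotProduct_inv_mulVec_lt_of_posDef_sub {S₁ S₂ : Matrix n n ℝ} (h₁ : S₁.PosDef)
    (h₂₁ : (S₂ - S₁).PosDef) {x : n → ℝ} (hx : x ≠ 0) :
    x ⬝ᵥ S₂⁻¹ *ᵥ x < x ⬝ᵥ S₁⁻¹ *ᵥ x := by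
  have h₂ : S₂.PosDef := by simpa using h₁.add h₂₁
  set y := S₂⁻¹ *ᵥ x
  have hS₂y : S₂ *ᵥ y = x := mulVec_nonsing_inv_mulVec h₂.det_pos.ne'.isUnit x
  have hy : y ≠ 0 := fun h => hx (by rw [← hS₂y, h, mulVec_zero])
  have hgap : y ⬝ᵥ S₁ *ᵥ y < y ⬝ᵥ S₂ *ᵥ y := by
    simpa [sub_mulVec, dotProduct_sub] using h₂₁.dotProduct_mulVec_pos hy
  calc x ⬝ᵥ S₂⁻¹ *ᵥ x = 2 * (x ⬝ᵥ y) - y ⬝ᵥ S₂ *ᵥ y := by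
        rw [hS₂y, dotProduct_comm y x]; ring
    _ < 2 * (x ⬝ᵥ y) - y ⬝ᵥ S₁ *ᵥ y := by linarith
    _ ≤ x ⬝ᵥ S₁⁻¹ *ᵥ x := h₁.two_mul_dotProduct_sub_le x y

end Matrix

theorem stmt4_general {d : ℕ} (T : ℝ)
    (v : Fin d → ℝ → ℝ)
    (hv_mono : ∀ i, StrictMonoOn (v i) (Icc 0 T))
    (hv_0 : ∀ i, v i 0 = 0)
    (A : Matrix (Fin d) (Fin d) ℝ) (hA : IsUnit A.det)
    (a : Fin d → ℝ) (ha : ∃ i, 0 < a i)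
    (Sg : ℝ → Matrix (Fin d) (Fin d) ℝ)
    (hSg : ∀ t, Sg t = A * Matrix.diagonal (fun i => v i t) * Aᵀ)
    (ta : ℝ → Fin d → ℝ)
    (hta : ∀ t ∈ Ioc (0 : ℝ) T, (∀ i, a i ≤ ta t i) ∧
      ∀ y : Fin d → ℝ, (∀ i, a i ≤ y i) →
        ta t ⬝ᵥ (Sg t)⁻¹ *ᵥ ta t ≤ y ⬝ᵥ (Sg t)⁻¹ *ᵥ y)
    (D : ℝ → ℝ) (hD : ∀ t, D t = ta t ⬝ᵥ (Sg t)⁻¹ *ᵥ ta t) :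
    ∀ t₁ t₂ : ℝ, 0 < t₁ → t₁ < t₂ → t₂ ≤ T → 0 < D t₂ ∧ D t₂ < D t₁ := by
  intro t₁ t₂ ht₁ h₁₂ ht₂
  have hincr : ∀ s t, 0 ≤ s → s < t → t ≤ T → (Sg t - Sg s).PosDef := fun s t hs hst ht => by
    rw [hSg, hSg, ← sub_mul, ← mul_sub, diagonal_sub]
    exact PosDef.mul_diagonal_mul_transpose hA fun i =>
      sub_pos.mpr (hv_mono i ⟨hs, hst.le.trans ht⟩ ⟨hs.trans hst.le, ht⟩ hst)
  have hSg_zero : Sg 0 = 0 := by simp [hSg, hv_0]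
  have hpos : ∀ t, 0 < t → t ≤ T → (Sg t).PosDef := fun t ht htT => by
    simpa [hSg_zero] using hincr 0 t le_rfl ht htT
  have hne : ∀ x : Fin d → ℝ, (∀ i, a i ≤ x i) → x ≠ 0 := fun x hx h0 => by
    obtain ⟨i, hi⟩ := ha
    exact (hi.trans_le (hx i)).ne' (congrFun h0 i)
  obtain ⟨hfeas₁, -⟩ := hta t₁ ⟨ht₁, h₁₂.le.trans ht₂⟩
  obtain ⟨hfeas₂, hmin₂⟩ := hta t₂ ⟨ht₁.trans h₁₂, ht₂⟩
  have hpos₁ := hpos t₁ ht₁ (h₁₂.le.trans ht₂)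
  have hpos₂ := hpos t₂ (ht₁.trans h₁₂) ht₂
  rw [hD, hD]
  exact ⟨hpos₂.inv.dotProduct_mulVec_pos (hne _ hfeas₂), (hmin₂ _ hfeas₁).trans_lt <|
    hpos₁.dotProduct_inv_mulVec_lt_of_posDef_sub (hincr t₁ t₂ ht₁.le h₁₂ ht₂) (hne _ hfeas₁)⟩

/-- Lemma 4.3 of the paper, monotonicity part. Under condition B0 and
`A` nonsingular, `D(t) := ã(t)^⊤ Σ(t)⁻¹ ã(t)` is strictly positive and strictly
decreasing on `(0, T]`. -/
theorem stmt4 {d : ℕ} (T : ℝ) (hT : 0 < T)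
    (v : Fin d → ℝ → ℝ)
    (hv_C1 : ∀ i, ContDiffOn ℝ 1 (v i) (Icc 0 T))
    (hv_mono : ∀ i, StrictMonoOn (v i) (Icc 0 T))
    (hv_0 : ∀ i, v i 0 = 0)
    (A : Matrix (Fin d) (Fin d) ℝ) (hA : IsUnit A.det)
    (a : Fin d → ℝ) (ha : ∃ i, 0 < a i)
    (Sg : ℝ → Matrix (Fin d) (Fin d) ℝ)
    (hSg : ∀ t, Sg t = A * Matrix.diagonal (fun i => v i t) * Aᵀ)
    (ta : ℝ → Fin d → ℝ)
    (hta : ∀ t ∈ Ioc (0 : ℝ) T, (∀ i, a i ≤ ta t i) ∧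
      ∀ y : Fin d → ℝ, (∀ i, a i ≤ y i) →
        ta t ⬝ᵥ (Sg t)⁻¹ *ᵥ ta t ≤ y ⬝ᵥ (Sg t)⁻¹ *ᵥ y)
    (D : ℝ → ℝ) (hD : ∀ t, D t = ta t ⬝ᵥ (Sg t)⁻¹ *ᵥ ta t) :
    ∀ t₁ t₂ : ℝ, 0 < t₁ → t₁ < t₂ → t₂ ≤ T → 0 < D t₂ ∧ D t₂ < D t₁ :=
  stmt4_general T v hv_mono hv_0 A hA a ha Sg hSg ta hta D hD
end

section
/- Under condition B0 (each v_i is C¹, strictly increasing, with v_i(0) = 0) and A nonsingular, for all 0 < t₁ < t₂ ≤ T the following quantitative decrease holds: D(t₂) ≤ D(t₁) − ‖ diag( √((v_i(t₂) − v_i(t₁))/(v_i(t₂) v_i(t₁)))_{i=1,…,d} ) · A^{−1} ã(t₁) ‖₂², and the subtracted squared norm is strictly positive. -/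
open Matrix Set

/-!
`ã(t₁)` is feasible for the problem at time `t₂`, so `D(t₂)` is at most the value of the
`Σ(t₂)`-quadratic form at `ã(t₁)`. In the coordinates `A⁻¹ x` both quadratic forms are
diagonal, `xᵀ Σ(t)⁻¹ x = ∑ᵢ cᵢ² / vᵢ(t)` with `c = A⁻¹ x`, and the gap between them is
`∑ᵢ (1/vᵢ(t₁) - 1/vᵢ(t₂)) cᵢ²`. This gap is positive because every `vᵢ` is strictly increasing
and `c ≠ 0`, as `ã(t₁) ≥ a` has a positive entry and `A` is invertible.
-/

namespace Matrix

variable {n : Type*} [Fintype n] [DecidableEq n]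

theorem dotProduct_transpose_mul_diagonal_mul_mulVec (B : Matrix n n ℝ) (w x : n → ℝ) :
    x ⬝ᵥ (Bᵀ * diagonal w * B) *ᵥ x = ∑ i, w i * (B *ᵥ x) i ^ 2 := by
  rw [← mulVec_mulVec, ← mulVec_mulVec, dotProduct_mulVec, vecMul_transpose]
  simp only [dotProduct, mulVec_diagonal]
  exact Finset.sum_congr rfl fun i _ => by ring

theorem inv_diagonal_of_ne_zero {w : n → ℝ} (hw : ∀ i, w i ≠ 0) :
    (diagonal w)⁻¹ = diagonal fun i => (w i)⁻¹ := by
  refine inv_eq_right_inv ?_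
  rw [diagonal_mul_diagonal, ← diagonal_one]
  exact congrArg diagonal (funext fun i => mul_inv_cancel₀ (hw i))

theorem dotProduct_inv_mul_diagonal_mul_transpose_mulVec (A : Matrix n n ℝ) {w : n → ℝ}
    (hw : ∀ i, w i ≠ 0) (x : n → ℝ) :
    x ⬝ᵥ (A * diagonal w * Aᵀ)⁻¹ *ᵥ x = ∑ i, (w i)⁻¹ * (A⁻¹ *ᵥ x) i ^ 2 := by
  rw [mul_inv_rev, mul_inv_rev, inv_diagonal_of_ne_zero hw, ← transpose_nonsing_inv,
    ← Matrix.mul_assoc]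
  exact dotProduct_transpose_mul_diagonal_mul_mulVec A⁻¹ _ x

theorem dotProduct_inv_mul_diagonal_mul_transpose_mulVec_eq_sub (A : Matrix n n ℝ)
    {w₁ w₂ : n → ℝ} (hw₁ : ∀ i, w₁ i ≠ 0) (hw₂ : ∀ i, w₂ i ≠ 0) (x : n → ℝ) :
    x ⬝ᵥ (A * diagonal w₂ * Aᵀ)⁻¹ *ᵥ x = x ⬝ᵥ (A * diagonal w₁ * Aᵀ)⁻¹ *ᵥ x -
      ∑ i, (w₂ i - w₁ i) / (w₂ i * w₁ i) * (A⁻¹ *ᵥ x) i ^ 2 := by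
  rw [dotProduct_inv_mul_diagonal_mul_transpose_mulVec A hw₁,
    dotProduct_inv_mul_diagonal_mul_transpose_mulVec A hw₂, ← Finset.sum_sub_distrib]
  refine Finset.sum_congr rfl fun i _ => ?_
  field_simp [hw₁ i, hw₂ i]
  ring

end Matrix

theorem Finset.sum_mul_sq_pos {n : Type*} [Fintype n] {r c : n → ℝ} (hr : ∀ i, 0 < r i)
    (hc : c ≠ 0) : 0 < ∑ i, r i * c i ^ 2 := by
  obtain ⟨i, hi⟩ := Function.ne_iff.1 hc
  exact Finset.sum_pos' (fun j _ => mul_nonneg (hr j).le (sq_nonneg _))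
    ⟨i, Finset.mem_univ i, mul_pos (hr i) (sq_pos_of_ne_zero hi)⟩

theorem StrictMonoOn.pos_of_mem_Ioc {f : ℝ → ℝ} {T t : ℝ} (hf : StrictMonoOn f (Icc 0 T))
    (hf0 : f 0 = 0) (ht : t ∈ Ioc 0 T) : 0 < f t := by
  have := hf (left_mem_Icc.2 (ht.1.le.trans ht.2)) (Ioc_subset_Icc_self ht) ht.1
  rwa [hf0] at this

theorem stmt5_general {d : ℕ} (T : ℝ)
    (v : Fin d → ℝ → ℝ)
    (hv_mono : ∀ i, StrictMonoOn (v i) (Icc 0 T))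
    (hv_0 : ∀ i, v i 0 = 0)
    (A : Matrix (Fin d) (Fin d) ℝ) (hA : IsUnit A.det)
    (a : Fin d → ℝ) (ha : ∃ i, 0 < a i)
    (Sg : ℝ → Matrix (Fin d) (Fin d) ℝ)
    (hSg : ∀ t, Sg t = A * Matrix.diagonal (fun i => v i t) * Aᵀ)
    (ta : ℝ → Fin d → ℝ)
    (hta : ∀ t ∈ Ioc (0 : ℝ) T, (∀ i, a i ≤ ta t i) ∧
      ∀ y : Fin d → ℝ, (∀ i, a i ≤ y i) →
        ta t ⬝ᵥ (Sg t)⁻¹ *ᵥ ta t ≤ y ⬝ᵥ (Sg t)⁻¹ *ᵥ y)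
    (D : ℝ → ℝ) (hD : ∀ t, D t = ta t ⬝ᵥ (Sg t)⁻¹ *ᵥ ta t) :
    ∀ t₁ t₂ : ℝ, 0 < t₁ → t₁ < t₂ → t₂ ≤ T →
      D t₂ ≤ D t₁ -
        ∑ i, (Real.sqrt ((v i t₂ - v i t₁) / (v i t₂ * v i t₁)) * (A⁻¹ *ᵥ ta t₁) i) ^ 2 ∧
      0 < ∑ i, (Real.sqrt ((v i t₂ - v i t₁) / (v i t₂ * v i t₁)) * (A⁻¹ *ᵥ ta t₁) i) ^ 2 := by
  intro t₁ t₂ ht₁ h12 h2T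
  have ht₁T : t₁ ∈ Ioc 0 T := ⟨ht₁, h12.le.trans h2T⟩
  have ht₂T : t₂ ∈ Ioc 0 T := ⟨ht₁.trans h12, h2T⟩
  have hv₁ i : 0 < v i t₁ := (hv_mono i).pos_of_mem_Ioc (hv_0 i) ht₁T
  have hv₂ i : 0 < v i t₂ := (hv_mono i).pos_of_mem_Ioc (hv_0 i) ht₂T
  have hgap i : 0 < (v i t₂ - v i t₁) / (v i t₂ * v i t₁) :=
    div_pos (sub_pos.2 (hv_mono i (Ioc_subset_Icc_self ht₁T) (Ioc_subset_Icc_self ht₂T) h12))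
      (mul_pos (hv₂ i) (hv₁ i))
  obtain ⟨hfeas, -⟩ := hta t₁ ht₁T
  have hdrop :
      D t₂ ≤ D t₁ - ∑ i, (v i t₂ - v i t₁) / (v i t₂ * v i t₁) * (A⁻¹ *ᵥ ta t₁) i ^ 2 := by
    rw [hD, hD, hSg, hSg, ← dotProduct_inv_mul_diagonal_mul_transpose_mulVec_eq_sub A
      (fun i => (hv₁ i).ne') (fun i => (hv₂ i).ne')]
    simpa only [hSg] using (hta t₂ ht₂T).2 (ta t₁) hfeas
  have hc : A⁻¹ *ᵥ ta t₁ ≠ 0 := by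
    obtain ⟨i, hai⟩ := ha
    have hta₁ : ta t₁ ≠ 0 := fun h => by simpa [h] using (hai.trans_le (hfeas i)).ne'
    rw [← mulVec_zero A⁻¹]
    exact (mulVec_injective_of_det_ne_zero (isUnit_nonsing_inv_det A hA).ne_zero).ne hta₁
  simp_rw [mul_pow, Real.sq_sqrt (hgap _).le]
  exact ⟨hdrop, Finset.sum_mul_sq_pos hgap hc⟩

/-- quantitative decrease of `D`, from the proof of Lemma 4.3. For
`0 < t₁ < t₂ ≤ T`,
`D(t₂) ≤ D(t₁) - ‖diag(√((v_i(t₂)-v_i(t₁))/(v_i(t₂)v_i(t₁)))) A⁻¹ ã(t₁)‖₂²`,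
and the subtracted squared norm is strictly positive. -/
theorem stmt5 {d : ℕ} (T : ℝ) (hT : 0 < T)
    (v : Fin d → ℝ → ℝ)
    (hv_C1 : ∀ i, ContDiffOn ℝ 1 (v i) (Icc 0 T))
    (hv_mono : ∀ i, StrictMonoOn (v i) (Icc 0 T))
    (hv_0 : ∀ i, v i 0 = 0)
    (A : Matrix (Fin d) (Fin d) ℝ) (hA : IsUnit A.det)
    (a : Fin d → ℝ) (ha : ∃ i, 0 < a i)
    (Sg : ℝ → Matrix (Fin d) (Fin d) ℝ)
    (hSg : ∀ t, Sg t = A * Matrix.diagonal (fun i => v i t) * Aᵀ)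
    (ta : ℝ → Fin d → ℝ)
    (hta : ∀ t ∈ Ioc (0 : ℝ) T, (∀ i, a i ≤ ta t i) ∧
      ∀ y : Fin d → ℝ, (∀ i, a i ≤ y i) →
        ta t ⬝ᵥ (Sg t)⁻¹ *ᵥ ta t ≤ y ⬝ᵥ (Sg t)⁻¹ *ᵥ y)
    (D : ℝ → ℝ) (hD : ∀ t, D t = ta t ⬝ᵥ (Sg t)⁻¹ *ᵥ ta t) :
    ∀ t₁ t₂ : ℝ, 0 < t₁ → t₁ < t₂ → t₂ ≤ T →
      D t₂ ≤ D t₁ -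
        ∑ i, (Real.sqrt ((v i t₂ - v i t₁) / (v i t₂ * v i t₁)) * (A⁻¹ *ᵥ ta t₁) i) ^ 2 ∧
      0 < ∑ i, (Real.sqrt ((v i t₂ - v i t₁) / (v i t₂ * v i t₁)) * (A⁻¹ *ᵥ ta t₁) i) ^ 2 :=
  stmt5_general T v hv_mono hv_0 A hA a ha Sg hSg ta hta D hD
end

section
/- Under condition B0 (each v_i is C¹, strictly increasing, with v_i(0) = 0), condition BI (the derivative v̇_i(T) > 0 for each i), and A nonsingular, the function D has a (one-sided, from the left) derivative at t = T given by Ḋ(T) = −‖ diag( √(v̇_i(T))/v_i(T) )_{i=1,…,d} · A^{−1} ã(T) ‖₂² < 0; that is, (D(T) − D(t))/(T − t) converges to this negative value as t → T from the left. -/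
/-!
Write `u = A⁻¹ x` and `w_i(t) = 1 / v_i(t)`. Then `D(t)` is the minimum over the convex set
`{x ≥ a}` of the weighted sum of squares `q_t(x) = ∑ w_i(t) u_i²`, attained at `ã(t)`.
Comparing `D` with `q` at the two minimisers `ã(t)` and `ã(T)` (envelope argument) sandwiches the
difference quotient of `D` between `∑ (Δw_i/Δt) u_i(ã(T))²` and `∑ (Δw_i/Δt) u_i(ã(t))²`.
Strong convexity of `q_T` at its minimiser, together with `w_i(T) ≤ w_i(t)`, gives
`w_i(T) (u_i(ã(t)) - u_i(ã(T)))² ≤ q_t(ã(T)) - q_T(ã(T)) → 0`, so both bounds tend to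
`∑ ẇ_i(T) u_i(ã(T))² = -∑ v̇_i(T) u_i(ã(T))² / v_i(T)²`. This is negative because `ã(T) ≥ a`
has a positive entry, so `ã(T) ≠ 0`.
-/

open Matrix Set Filter Topology

theorem Matrix.dotProduct_mulVec_inv_mul_diagonal_mul_transpose {n : Type*} [Fintype n]
    [DecidableEq n] (A : Matrix n n ℝ) {w : n → ℝ} (hw : ∀ i, w i ≠ 0) (x : n → ℝ) :
    x ⬝ᵥ (A * diagonal w * Aᵀ)⁻¹ *ᵥ x = ∑ i, (w i)⁻¹ * (A⁻¹ *ᵥ x) i ^ 2 := by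
  have hinv : (diagonal w)⁻¹ = diagonal fun i => (w i)⁻¹ :=
    inv_eq_right_inv (by simp [diagonal_mul_diagonal, mul_inv_cancel₀ (hw _)])
  rw [mul_inv_rev, mul_inv_rev, ← transpose_nonsing_inv, hinv, ← mulVec_mulVec,
    ← mulVec_mulVec, dotProduct_mulVec, vecMul_transpose]
  simp only [dotProduct, mulVec_diagonal]
  exact Finset.sum_congr rfl fun i _ => by ring

theorem QuadraticMap.apply_add_apply_sub_le_of_isMinOn {E : Type*} [AddCommGroup E]
    [Module ℝ E] {Q : QuadraticForm ℝ E} {K : Set E} (hK : Convex ℝ K) {m x : E}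
    (hm : m ∈ K) (hmin : IsMinOn Q K m) (hx : x ∈ K) :
    Q m + Q (x - m) ≤ Q x := by
  set p := polar Q m (x - m)
  have hline : ∀ s : ℝ, Q (m + s • (x - m)) = Q m + s * p + s ^ 2 * Q (x - m) := by
    intro s
    rw [QuadraticMap.map_add (⇑Q), QuadraticMap.map_smul, polar_smul_right, smul_eq_mul,
      smul_eq_mul]
    ring
  have hp_add : ∀ s ∈ Ioc (0 : ℝ) 1, 0 ≤ p + s * Q (x - m) := by
    intro s hs
    have h := isMinOn_iff.mp hmin _ (hK.add_smul_sub_mem hm hx (Ioc_subset_Icc_self hs))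
    rw [hline] at h
    nlinarith [hs.1]
  have hp : 0 ≤ p := by
    have hlim : Tendsto (fun s : ℝ => p + s * Q (x - m)) (𝓝[>] 0) (𝓝 p) :=
      ((by fun_prop : Continuous fun s : ℝ => p + s * Q (x - m)).tendsto' 0 p
        (by simp)).mono_left nhdsWithin_le_nhds
    exact ge_of_tendsto hlim (eventually_of_mem (Ioc_mem_nhdsGT zero_lt_one) hp_add)
  have h1 := hline 1
  rw [one_smul, add_sub_cancel] at h1
  rw [h1]
  linarith

theorem slope_mem_Icc_of_isMinOn {E : Type*} {f : ℝ → E → ℝ} {K : Set E} {m : ℝ → E}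
    {s t : ℝ} (hts : t < s) (hs : m s ∈ K) (hmins : IsMinOn (f s) K (m s)) (ht : m t ∈ K)
    (hmint : IsMinOn (f t) K (m t)) :
    slope (fun r => f r (m r)) s t ∈
      Icc (slope (fun r => f r (m s)) s t) (slope (fun r => f r (m t)) s t) := by
  have hneg : t - s ≤ 0 := (sub_neg.mpr hts).le
  simp only [slope_def_field, mem_Icc]
  constructor
  · exact div_le_div_of_nonpos_of_le hneg (by linarith [isMinOn_iff.mp hmint _ hs])
  · exact div_le_div_of_nonpos_of_le hneg (by linarith [isMinOn_iff.mp hmins _ ht])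

theorem tendsto_of_isMinOn_weightedSumSquares {ι α E : Type*} [Fintype ι]
    [AddCommGroup E] [Module ℝ E] {K : Set E} (hK : Convex ℝ K) (L : E →ₗ[ℝ] ι → ℝ) {w : ι → α → ℝ}
    {l : Filter α} {t₀ : α} {x : α → E} (hw : ∀ i, Tendsto (w i) l (𝓝 (w i t₀)))
    (hw_pos : ∀ i, 0 < w i t₀) (hw_le : ∀ᶠ t in l, ∀ i, w i t₀ ≤ w i t)
    (hx₀ : x t₀ ∈ K) (hmin₀ : IsMinOn (fun y => ∑ i, w i t₀ * L y i ^ 2) K (x t₀))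
    (hx : ∀ᶠ t in l, x t ∈ K ∧ IsMinOn (fun y => ∑ i, w i t * L y i ^ 2) K (x t)) :
    Tendsto (fun t => L (x t)) l (𝓝 (L (x t₀))) := by
  set Q := (QuadraticMap.weightedSumSquares ℝ fun i => w i t₀).comp L
  have hQ : ∀ y, Q y = ∑ i, w i t₀ * L y i ^ 2 := fun y => by
    simp [Q, QuadraticMap.weightedSumSquares_apply, sq]
  set r : α → ℝ := fun t => ∑ i, w i t * L (x t₀) i ^ 2 - Q (x t₀)
  have hr : Tendsto r l (𝓝 0) := by
    have h := tendsto_finsetSum Finset.univ fun i _ => (hw i).mul_const (L (x t₀) i ^ 2)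
    simpa [r, hQ] using h.sub_const (Q (x t₀))
  -- strong convexity of `Q` at its minimiser, then monotonicity of the weights
  have hbound : ∀ᶠ t in l, ∀ i, w i t₀ * (L (x t) i - L (x t₀) i) ^ 2 ≤ r t := by
    filter_upwards [hw_le, hx] with t hle ⟨hxt, hmint⟩ i
    have hconv := QuadraticMap.apply_add_apply_sub_le_of_isMinOn hK hx₀
      (by simpa only [← hQ] using hmin₀) hxt
    have hmono : Q (x t) ≤ ∑ j, w j t * L (x t) j ^ 2 := by
      rw [hQ]
      exact Finset.sum_le_sum fun j _ => mul_le_mul_of_nonneg_right (hle j) (sq_nonneg _)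
    have hsingle : w i t₀ * (L (x t) i - L (x t₀) i) ^ 2 ≤ Q (x t - x t₀) := by
      rw [hQ]
      simpa using Finset.single_le_sum (f := fun j => w j t₀ * L (x t - x t₀) j ^ 2)
        (fun j _ => mul_nonneg (hw_pos j).le (sq_nonneg _)) (Finset.mem_univ i)
    linarith [isMinOn_iff.mp hmint _ hx₀]
  refine tendsto_pi_nhds.mpr fun i => tendsto_sub_nhds_zero_iff.mp ?_
  refine squeeze_zero_norm' ?_ (by simpa using (hr.div_const (w i t₀)).sqrt)
  filter_upwards [hbound] with t ht
  exact Real.abs_le_sqrt ((le_div_iff₀' (hw_pos i)).mpr (ht i))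

theorem slope_finset_sum_mul_const {ι : Type*} (s : Finset ι) (w : ι → ℝ → ℝ) (c : ι → ℝ)
    (a b : ℝ) :
    slope (fun t => ∑ i ∈ s, w i t * c i) a b = ∑ i ∈ s, slope (w i) a b * c i := by
  simp only [slope_def_field, ← Finset.sum_sub_distrib, Finset.sum_div, ← sub_mul,
    div_mul_eq_mul_div]

theorem hasDerivWithinAt_Iio_of_isMinOn_weightedSumSquares {ι E : Type*} [Fintype ι]
    [AddCommGroup E] [Module ℝ E] {K : Set E} (hK : Convex ℝ K) (L : E →ₗ[ℝ] ι → ℝ)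
    {w : ι → ℝ → ℝ} {w' : ι → ℝ} {T : ℝ} {x : ℝ → E}
    (hw : ∀ i, HasDerivWithinAt (w i) (w' i) (Iio T) T)
    (hw_pos : ∀ i, 0 < w i T) (hw_le : ∀ᶠ t in 𝓝[<] T, ∀ i, w i T ≤ w i t)
    (hxT : x T ∈ K) (hminT : IsMinOn (fun y => ∑ i, w i T * L y i ^ 2) K (x T))
    (hx : ∀ᶠ t in 𝓝[<] T, x t ∈ K ∧ IsMinOn (fun y => ∑ i, w i t * L y i ^ 2) K (x t)) :
    HasDerivWithinAt (fun t => ∑ i, w i t * L (x t) i ^ 2) (∑ i, w' i * L (x T) i ^ 2)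
      (Iio T) T := by
  have hT : T ∉ Iio T := self_notMem_Iio
  have hslope : ∀ i, Tendsto (slope (w i) T) (𝓝[<] T) (𝓝 (w' i)) := fun i =>
    (hasDerivWithinAt_iff_tendsto_slope' hT).mp (hw i)
  have hxconv := tendsto_of_isMinOn_weightedSumSquares hK L
    (fun i => (hw i).continuousWithinAt.tendsto) hw_pos hw_le hxT hminT hx
  have hlower : Tendsto (fun t => ∑ i, slope (w i) T t * L (x T) i ^ 2) (𝓝[<] T)
      (𝓝 (∑ i, w' i * L (x T) i ^ 2)) :=
    tendsto_finsetSum _ fun i _ => (hslope i).mul_const _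
  have hupper : Tendsto (fun t => ∑ i, slope (w i) T t * L (x t) i ^ 2) (𝓝[<] T)
      (𝓝 (∑ i, w' i * L (x T) i ^ 2)) :=
    tendsto_finsetSum _ fun i _ => (hslope i).mul ((tendsto_pi_nhds.mp hxconv i).pow 2)
  have hsandwich : ∀ᶠ t in 𝓝[<] T, slope (fun t => ∑ i, w i t * L (x t) i ^ 2) T t ∈
      Icc (∑ i, slope (w i) T t * L (x T) i ^ 2) (∑ i, slope (w i) T t * L (x t) i ^ 2) := by
    filter_upwards [hx, self_mem_nhdsWithin] with t ⟨hxt, hmint⟩ (htT : t < T)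
    simpa only [slope_finset_sum_mul_const] using
      slope_mem_Icc_of_isMinOn (f := fun r y => ∑ i, w i r * L y i ^ 2) htT hxT hminT hxt hmint
  rw [hasDerivWithinAt_iff_tendsto_slope' hT]
  exact tendsto_of_tendsto_of_tendsto_of_le_of_le' hlower hupper
    (hsandwich.mono fun _ h => h.1) (hsandwich.mono fun _ h => h.2)

theorem HasDerivWithinAt.tendsto_sub_div_sub {f : ℝ → ℝ} {f' x : ℝ} {s : Set ℝ}
    (h : HasDerivWithinAt f f' s x) (hx : x ∉ s) :
    Tendsto (fun t => (f x - f t) / (x - t)) (𝓝[s] x) (𝓝 f') :=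
  ((hasDerivWithinAt_iff_tendsto_slope' hx).mp h).congr fun t => by
    rw [slope_def_field, ← neg_sub (f x), ← neg_sub x, neg_div_neg_eq]

theorem sum_sq_mul_pos {ι : Type*} [Fintype ι] {c b : ι → ℝ} (hc : ∀ i, c i ≠ 0)
    (hb : b ≠ 0) : 0 < ∑ i, (c i * b i) ^ 2 := by
  obtain ⟨j, hj⟩ := Function.ne_iff.mp hb
  exact Finset.sum_pos' (fun i _ => sq_nonneg _)
    ⟨j, Finset.mem_univ j, sq_pos_of_ne_zero (mul_ne_zero (hc j) hj)⟩

theorem stmt6_general {d : ℕ} (T : ℝ) (hT : 0 < T)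
    (v : Fin d → ℝ → ℝ)
    (hv_mono : ∀ i, StrictMonoOn (v i) (Icc 0 T))
    (hv_0 : ∀ i, v i 0 = 0)
    (v' : Fin d → ℝ)
    (hv' : ∀ i, HasDerivWithinAt (v i) (v' i) (Icc 0 T) T)
    (hBI : ∀ i, 0 < v' i)
    (A : Matrix (Fin d) (Fin d) ℝ) (hA : IsUnit A.det)
    (a : Fin d → ℝ) (ha : ∃ i, 0 < a i)
    (Sg : ℝ → Matrix (Fin d) (Fin d) ℝ)
    (hSg : ∀ t, Sg t = A * Matrix.diagonal (fun i => v i t) * Aᵀ)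
    (ta : ℝ → Fin d → ℝ)
    (hta : ∀ t ∈ Ioc (0 : ℝ) T, (∀ i, a i ≤ ta t i) ∧
      ∀ y : Fin d → ℝ, (∀ i, a i ≤ y i) →
        ta t ⬝ᵥ (Sg t)⁻¹ *ᵥ ta t ≤ y ⬝ᵥ (Sg t)⁻¹ *ᵥ y)
    (D : ℝ → ℝ) (hD : ∀ t, D t = ta t ⬝ᵥ (Sg t)⁻¹ *ᵥ ta t) :
    Tendsto (fun t => (D T - D t) / (T - t)) (nhdsWithin T (Iio T))
      (nhds (-∑ i, (Real.sqrt (v' i) / v i T * (A⁻¹ *ᵥ ta T) i) ^ 2)) ∧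
    (-∑ i, (Real.sqrt (v' i) / v i T * (A⁻¹ *ᵥ ta T) i) ^ 2) < 0 := by
  have hv_pos : ∀ i, ∀ t ∈ Ioc 0 T, 0 < v i t := fun i t ht => by
    simpa [hv_0] using hv_mono i (left_mem_Icc.mpr hT.le) (Ioc_subset_Icc_self ht) ht.1
  have hTmem : T ∈ Ioc 0 T := right_mem_Ioc.mpr hT
  have hleft : Ioo 0 T ∈ 𝓝[<] T := Ioo_mem_nhdsLT hT
  have hquad : ∀ t ∈ Ioc 0 T, ∀ y,
      y ⬝ᵥ (Sg t)⁻¹ *ᵥ y = ∑ i, (v i t)⁻¹ * (A⁻¹ *ᵥ y) i ^ 2 := fun t ht y => by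
    rw [hSg]
    exact dotProduct_mulVec_inv_mul_diagonal_mul_transpose A (fun i => (hv_pos i t ht).ne') y
  have hmin : ∀ t ∈ Ioc 0 T, ta t ∈ Ici a ∧
      IsMinOn (fun y => ∑ i, (v i t)⁻¹ * A⁻¹.mulVecLin y i ^ 2) (Ici a) (ta t) := fun t ht =>
    ⟨(hta t ht).1, isMinOn_iff.mpr fun y hy => by
      simpa only [mulVecLin_apply, hquad t ht] using (hta t ht).2 y hy⟩
  have hw : ∀ i, HasDerivWithinAt (fun t => (v i t)⁻¹) (-v' i / v i T ^ 2) (Iio T) T :=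
    fun i => ((hv' i).inv (hv_pos i T hTmem).ne').mono_of_mem_nhdsWithin (Icc_mem_nhdsLT hT)
  have hw_le : ∀ᶠ t in 𝓝[<] T, ∀ i, (v i T)⁻¹ ≤ (v i t)⁻¹ := by
    filter_upwards [hleft] with t ht i
    exact inv_anti₀ (hv_pos i t (Ioo_subset_Ioc_self ht))
      ((hv_mono i).monotoneOn (Ioo_subset_Icc_self ht) (right_mem_Icc.mpr hT.le) ht.2.le)
  have hq_deriv := hasDerivWithinAt_Iio_of_isMinOn_weightedSumSquares (convex_Ici a)
    A⁻¹.mulVecLin hw (fun i => inv_pos.mpr (hv_pos i T hTmem)) hw_le (hmin T hTmem).1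
    (hmin T hTmem).2 (eventually_of_mem hleft fun t ht => hmin t (Ioo_subset_Ioc_self ht))
  have hD_deriv : HasDerivWithinAt D (∑ i, -v' i / v i T ^ 2 * (A⁻¹ *ᵥ ta T) i ^ 2) (Iio T) T :=
    hq_deriv.congr_of_eventuallyEq
      (eventually_of_mem hleft fun t ht => hD t ▸ hquad t (Ioo_subset_Ioc_self ht) (ta t))
      (hD T ▸ hquad T hTmem (ta T))
  have hlimit : (-∑ i, (Real.sqrt (v' i) / v i T * (A⁻¹ *ᵥ ta T) i) ^ 2) =
      ∑ i, -v' i / v i T ^ 2 * (A⁻¹ *ᵥ ta T) i ^ 2 := by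
    rw [← Finset.sum_neg_distrib]
    refine Finset.sum_congr rfl fun i _ => ?_
    rw [mul_pow, div_pow, Real.sq_sqrt (hBI i).le]
    ring
  have hta_ne : ta T ≠ 0 := by
    obtain ⟨i, hi⟩ := ha
    exact ne_of_apply_ne (· i) (hi.trans_le ((hta T hTmem).1 i)).ne'
  have hb_ne : A⁻¹ *ᵥ ta T ≠ 0 := by
    simpa using (mulVec_injective_of_isUnit ((isUnit_iff_isUnit_det _).mpr
      (isUnit_nonsing_inv_det A hA))).ne hta_ne
  refine ⟨hlimit ▸ hD_deriv.tendsto_sub_div_sub self_notMem_Iio, neg_neg_of_pos ?_⟩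
  exact sum_sq_mul_pos (fun i => div_ne_zero (Real.sqrt_ne_zero'.mpr (hBI i))
    (hv_pos i T hTmem).ne') hb_ne

/-- Lemma 4.3, derivative part. Under B0, BI and `A` nonsingular, the
function `D` has a left derivative at `t = T`:
`(D(T) - D(t))/(T - t) → -‖diag(√(v̇_i(T))/v_i(T)) A⁻¹ ã(T)‖₂² < 0` as `t → T⁻`. -/
theorem stmt6 {d : ℕ} (T : ℝ) (hT : 0 < T)
    (v : Fin d → ℝ → ℝ)
    (hv_C1 : ∀ i, ContDiffOn ℝ 1 (v i) (Icc 0 T))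
    (hv_mono : ∀ i, StrictMonoOn (v i) (Icc 0 T))
    (hv_0 : ∀ i, v i 0 = 0)
    (v' : Fin d → ℝ)
    (hv' : ∀ i, HasDerivWithinAt (v i) (v' i) (Icc 0 T) T)
    (hBI : ∀ i, 0 < v' i)
    (A : Matrix (Fin d) (Fin d) ℝ) (hA : IsUnit A.det)
    (a : Fin d → ℝ) (ha : ∃ i, 0 < a i)
    (Sg : ℝ → Matrix (Fin d) (Fin d) ℝ)
    (hSg : ∀ t, Sg t = A * Matrix.diagonal (fun i => v i t) * Aᵀ)
    (ta : ℝ → Fin d → ℝ)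
    (hta : ∀ t ∈ Ioc (0 : ℝ) T, (∀ i, a i ≤ ta t i) ∧
      ∀ y : Fin d → ℝ, (∀ i, a i ≤ y i) →
        ta t ⬝ᵥ (Sg t)⁻¹ *ᵥ ta t ≤ y ⬝ᵥ (Sg t)⁻¹ *ᵥ y)
    (D : ℝ → ℝ) (hD : ∀ t, D t = ta t ⬝ᵥ (Sg t)⁻¹ *ᵥ ta t) :
    Tendsto (fun t => (D T - D t) / (T - t)) (nhdsWithin T (Iio T))
      (nhds (-∑ i, (Real.sqrt (v' i) / v i T * (A⁻¹ *ᵥ ta T) i) ^ 2)) ∧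
    (-∑ i, (Real.sqrt (v' i) / v i T * (A⁻¹ *ᵥ ta T) i) ^ 2) < 0 :=
  stmt6_general T hT v hv_mono hv_0 v' hv' hBI A hA a ha Sg hSg ta hta D hD
end

section
/- For any vector f = (f₁,…,f_d) ∈ ℝ^d and any L > 0, writing f_i⁺ := max(f_i, 0), f_i⁻ := min(f_i, 0), and S := Σ_{i=1}^d f_i, the following integral identity holds: ∫_{ℝ^d} 1{∃ t ∈ [0,L] : x_i < f_i·t for all i = 1,…,d} · exp(Σ_{i=1}^d x_i) dx equals 1 + (Σ_{i=1}^d f_i⁺)·L when S = 0, and equals (Σ_{i=1}^d f_i⁻)/S + ((Σ_{i=1}^d f_i⁺)/S)·e^{S·L} when S ≠ 0. -/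
/-!
The weight `exp (∑ i, x i)` turns Lebesgue measure into a product measure `ν = expSumVolume`
under which the orthant `{x | ∀ i, x i < c i}` has mass `exp (∑ i, c i)`. The region is the union
of the orthants below `f t`, `t ∈ [a, b]`. Since `{t | ∀ i, x i < f i * t}` is an interval, the
sweeps over `[a, b]` and `[b, c]` meet exactly in the orthant below `f b`, so `ν` of the sweep is
additive up to `exp (S b)`, where `S = ∑ i, f i`. Over a short interval `[u, v]` the sweep
contains the two endpoint orthants and lies in the orthant below their coordinatewise maximum;
these bounds agree to first order in `v - u` and give `d/db ν (sweep a b) = P exp (S b)` with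
`P = ∑ i, (f i)⁺`. Integrating in `b` yields the formula.
-/

open MeasureTheory Set Real Filter Topology

lemma Set.indicator_univ_pi_prod {ι α M : Type*} [Fintype ι] [CommMonoidWithZero M]
    (s : ι → Set α) (g : ι → α → M) (x : ι → α) :
    (univ.pi s).indicator (fun x => ∏ i, g i (x i)) x = ∏ i, (s i).indicator (g i) (x i) := by
  classical
  simp only [Set.indicator_apply, Set.mem_univ_pi, Finset.prod_ite_zero, Finset.mem_univ,
    true_implies]

lemma tendsto_exp_mul_sub_one_div (c : ℝ) :
    Tendsto (fun h => (exp (c * h) - 1) / h) (𝓝[≠] 0) (𝓝 c) := by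
  have h := ((hasDerivAt_id (0 : ℝ)).const_mul c).exp.tendsto_slope
  simpa only [slope_fun_def_field, id, mul_zero, exp_zero, one_mul, mul_one, sub_zero] using h

lemma integral_exp_mul {c : ℝ} (hc : c ≠ 0) (a b : ℝ) :
    ∫ t in a..b, exp (c * t) = (exp (c * b) - exp (c * a)) / c := by
  rw [intervalIntegral.integral_comp_mul_left exp hc, integral_exp, smul_eq_mul, inv_mul_eq_div]

variable {ι : Type*}

def orthant (c : ι → ℝ) : Set (ι → ℝ) := univ.pi fun i => Iio (c i)

lemma mem_orthant {c x : ι → ℝ} : x ∈ orthant c ↔ ∀ i, x i < c i := by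
  simp [orthant]

lemma orthant_inter_orthant (c c' : ι → ℝ) :
    orthant c ∩ orthant c' = orthant fun i => min (c i) (c' i) := by
  ext x
  simp [mem_orthant, forall_and]

def orthantSweep (f : ι → ℝ) (a b : ℝ) : Set (ι → ℝ) :=
  {x | ∃ t ∈ Icc a b, ∀ i, x i < f i * t}

section Sweep

variable (f : ι → ℝ) {a b c : ℝ}

lemma orthantSweep_subset_orthant_max :
    orthantSweep f a b ⊆ orthant fun i => max (f i * a) (f i * b) := by
  rintro x ⟨t, ⟨hat, htb⟩, hx⟩
  refine mem_orthant.2 fun i => (hx i).trans_le ?_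
  rcases le_total 0 (f i) with hf | hf
  · exact le_max_of_le_right (mul_le_mul_of_nonneg_left htb hf)
  · exact le_max_of_le_left (mul_le_mul_of_nonpos_left hat hf)

lemma orthant_union_orthant_subset_orthantSweep (hab : a ≤ b) :
    (orthant fun i => f i * a) ∪ (orthant fun i => f i * b) ⊆ orthantSweep f a b := by
  rintro x (hx | hx)
  · exact ⟨a, ⟨le_rfl, hab⟩, mem_orthant.1 hx⟩
  · exact ⟨b, ⟨hab, le_rfl⟩, mem_orthant.1 hx⟩

lemma orthantSweep_union_orthantSweep (hab : a ≤ b) (hbc : b ≤ c) :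
    orthantSweep f a b ∪ orthantSweep f b c = orthantSweep f a c := by
  ext x
  constructor
  · rintro (⟨t, ht, hx⟩ | ⟨t, ht, hx⟩)
    · exact ⟨t, ⟨ht.1, ht.2.trans hbc⟩, hx⟩
    · exact ⟨t, ⟨hab.trans ht.1, ht.2⟩, hx⟩
  · rintro ⟨t, ht, hx⟩
    rcases le_total t b with htb | hbt
    · exact Or.inl ⟨t, ⟨ht.1, htb⟩, hx⟩
    · exact Or.inr ⟨t, ⟨hbt, ht.2⟩, hx⟩

lemma orthantSweep_inter_orthantSweep (hab : a ≤ b) (hbc : b ≤ c) :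
    orthantSweep f a b ∩ orthantSweep f b c = orthant fun i => f i * b := by
  ext x
  constructor
  · rintro ⟨⟨s, hs, hxs⟩, ⟨t, ht, hxt⟩⟩
    refine mem_orthant.2 fun i => ?_
    rcases le_total 0 (f i) with hf | hf
    · exact (hxs i).trans_le (mul_le_mul_of_nonneg_left hs.2 hf)
    · exact (hxt i).trans_le (mul_le_mul_of_nonpos_left ht.1 hf)
  · intro hx
    exact ⟨⟨b, ⟨hab, le_rfl⟩, mem_orthant.1 hx⟩, ⟨b, ⟨le_rfl, hbc⟩, mem_orthant.1 hx⟩⟩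

end Sweep

variable [Fintype ι]

lemma measurableSet_orthant (c : ι → ℝ) : MeasurableSet (orthant c) :=
  .univ_pi fun _ => measurableSet_Iio

lemma isOpen_orthantSweep (f : ι → ℝ) (a b : ℝ) : IsOpen (orthantSweep f a b) := by
  have : orthantSweep f a b = ⋃ t ∈ Icc a b, orthant fun i => f i * t := by
    ext x
    simp [orthantSweep, mem_orthant]
  rw [this]
  exact isOpen_biUnion fun t _ => isOpen_set_pi finite_univ fun i _ => isOpen_Iio

lemma indicator_orthant_exp_sum (c : ι → ℝ) :
    (orthant c).indicator (fun x => exp (∑ i, x i))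
      = fun x => ∏ i, (Iio (c i)).indicator exp (x i) := by
  funext x
  simp only [Real.exp_sum]
  exact Set.indicator_univ_pi_prod _ _ x

lemma integrableOn_exp_sum_orthant (c : ι → ℝ) :
    IntegrableOn (fun x : ι → ℝ => exp (∑ i, x i)) (orthant c) := by
  rw [← integrable_indicator_iff (measurableSet_orthant c), indicator_orthant_exp_sum]
  exact Integrable.fintype_prod fun i =>
    (integrable_indicator_iff measurableSet_Iio).2
      ((integrableOn_exp_Iic (c i)).mono_set Iio_subset_Iic_self)

lemma setIntegral_exp_sum_orthant (c : ι → ℝ) :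
    ∫ x in orthant c, exp (∑ i, x i) = exp (∑ i, c i) := by
  rw [← integral_indicator (measurableSet_orthant c), indicator_orthant_exp_sum,
    integral_fintype_prod_volume_eq_prod, Real.exp_sum]
  refine Finset.prod_congr rfl fun i _ => ?_
  rw [integral_indicator measurableSet_Iio, ← integral_Iic_eq_integral_Iio, integral_exp_Iic]

variable (ι) in
noncomputable def expSumVolume : Measure (ι → ℝ) :=
  volume.withDensity fun x => ENNReal.ofReal (exp (∑ i, x i))

lemma measureReal_expSumVolume {s : Set (ι → ℝ)} (hs : MeasurableSet s) :
    (expSumVolume ι).real s = ∫ x in s, exp (∑ i, x i) := by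
  rw [measureReal_def, expSumVolume, withDensity_apply _ hs,
    integral_eq_lintegral_of_nonneg_ae (ae_of_all _ fun x => (exp_pos _).le) (by fun_prop)]

lemma expSumVolume_orthant (c : ι → ℝ) :
    expSumVolume ι (orthant c) = ENNReal.ofReal (exp (∑ i, c i)) := by
  rw [expSumVolume, withDensity_apply _ (measurableSet_orthant c),
    ← ofReal_integral_eq_lintegral_ofReal (integrableOn_exp_sum_orthant c)
      (ae_of_all _ fun x => (exp_pos _).le), setIntegral_exp_sum_orthant]

lemma expSumVolume_orthant_ne_top (c : ι → ℝ) : expSumVolume ι (orthant c) ≠ ⊤ := by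
  rw [expSumVolume_orthant]
  exact ENNReal.ofReal_ne_top

lemma measureReal_expSumVolume_orthant (c : ι → ℝ) :
    (expSumVolume ι).real (orthant c) = exp (∑ i, c i) := by
  rw [measureReal_def, expSumVolume_orthant, ENNReal.toReal_ofReal (exp_pos _).le]

section Sweep

variable (f : ι → ℝ) {a b c t u v : ℝ}

lemma sum_max_mul_mul (hab : a ≤ b) :
    ∑ i, max (f i * a) (f i * b) = (∑ i, f i) * a + (∑ i, max (f i) 0) * (b - a) := by
  rw [Finset.sum_mul, Finset.sum_mul, ← Finset.sum_add_distrib]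
  refine Finset.sum_congr rfl fun i _ => ?_
  rcases le_total 0 (f i) with hf | hf
  · rw [max_eq_right (mul_le_mul_of_nonneg_left hab hf), max_eq_left hf]; ring
  · rw [max_eq_left (mul_le_mul_of_nonpos_left hab hf), max_eq_right hf]; ring

lemma sum_min_mul_mul (hab : a ≤ b) :
    ∑ i, min (f i * a) (f i * b) = (∑ i, f i) * b - (∑ i, max (f i) 0) * (b - a) := by
  rw [Finset.sum_mul, Finset.sum_mul, ← Finset.sum_sub_distrib]
  refine Finset.sum_congr rfl fun i _ => ?_
  rcases le_total 0 (f i) with hf | hf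
  · rw [min_eq_left (mul_le_mul_of_nonneg_left hab hf), max_eq_left hf]; ring
  · rw [min_eq_right (mul_le_mul_of_nonpos_left hab hf), max_eq_right hf]; ring

lemma expSumVolume_orthantSweep_ne_top (a b : ℝ) : expSumVolume ι (orthantSweep f a b) ≠ ⊤ :=
  ne_top_of_le_ne_top (expSumVolume_orthant_ne_top _)
    (measure_mono (orthantSweep_subset_orthant_max f))

lemma measureReal_orthantSweep_le (hab : a ≤ b) :
    (expSumVolume ι).real (orthantSweep f a b)
      ≤ exp ((∑ i, f i) * a + (∑ i, max (f i) 0) * (b - a)) := by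
  rw [← sum_max_mul_mul f hab, ← measureReal_expSumVolume_orthant]
  exact measureReal_mono (orthantSweep_subset_orthant_max f) (expSumVolume_orthant_ne_top _)

lemma le_measureReal_orthantSweep (hab : a ≤ b) :
    exp ((∑ i, f i) * a) + exp ((∑ i, f i) * b)
        - exp ((∑ i, f i) * b - (∑ i, max (f i) 0) * (b - a))
      ≤ (expSumVolume ι).real (orthantSweep f a b) := by
  have hunion := measureReal_union_add_inter (μ := expSumVolume ι)
    (s := orthant fun i => f i * a) (measurableSet_orthant fun i => f i * b)
    (expSumVolume_orthant_ne_top _) (expSumVolume_orthant_ne_top _)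
  rw [orthant_inter_orthant, measureReal_expSumVolume_orthant, measureReal_expSumVolume_orthant,
    measureReal_expSumVolume_orthant, sum_min_mul_mul f hab, ← Finset.sum_mul,
    ← Finset.sum_mul] at hunion
  have hle := measureReal_mono (orthant_union_orthant_subset_orthantSweep f hab)
    (expSumVolume_orthantSweep_ne_top f a b)
  linarith

lemma measureReal_orthantSweep_eq_add_sub (hab : a ≤ b) (hbc : b ≤ c) :
    (expSumVolume ι).real (orthantSweep f a c)
      = (expSumVolume ι).real (orthantSweep f a b) + (expSumVolume ι).real (orthantSweep f b c)
        - exp ((∑ i, f i) * b) := by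
  have h := measureReal_union_add_inter (μ := expSumVolume ι) (s := orthantSweep f a b)
    (isOpen_orthantSweep f b c).measurableSet (expSumVolume_orthantSweep_ne_top f a b)
    (expSumVolume_orthantSweep_ne_top f b c)
  rw [orthantSweep_union_orthantSweep f hab hbc, orthantSweep_inter_orthantSweep f hab hbc,
    measureReal_expSumVolume_orthant, ← Finset.sum_mul] at h
  linarith

lemma slope_measureReal_orthantSweep_mem_Icc (hau : a ≤ u) (huv : u < v) :
    ((expSumVolume ι).real (orthantSweep f a v)
        - (expSumVolume ι).real (orthantSweep f a u)) / (v - u)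
      ∈ Icc (exp ((∑ i, f i) * v) * ((exp ((∑ i, max (f i) 0) * (u - v)) - 1) / (u - v)))
        (exp ((∑ i, f i) * u) * ((exp ((∑ i, max (f i) 0) * (v - u)) - 1) / (v - u))) := by
  have hvu : 0 < v - u := sub_pos.2 huv
  have hadd := measureReal_orthantSweep_eq_add_sub f hau huv.le
  have hlo := le_measureReal_orthantSweep f huv.le
  have hhi := measureReal_orthantSweep_le f huv.le
  refine ⟨?_, ?_⟩
  · have e : exp ((∑ i, f i) * v) * ((exp ((∑ i, max (f i) 0) * (u - v)) - 1) / (u - v))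
        = (exp ((∑ i, f i) * v) - exp ((∑ i, f i) * v - (∑ i, max (f i) 0) * (v - u)))
          / (v - u) := by
      rw [sub_eq_add_neg _ ((∑ i, max (f i) 0) * _), exp_add, ← neg_sub v u]
      field_simp
      ring_nf
    rw [e]
    exact div_le_div_of_nonneg_right (by linarith) hvu.le
  · have e : exp ((∑ i, f i) * u) * ((exp ((∑ i, max (f i) 0) * (v - u)) - 1) / (v - u))
        = (exp ((∑ i, f i) * u + (∑ i, max (f i) 0) * (v - u)) - exp ((∑ i, f i) * u))
          / (v - u) := by
      rw [exp_add]
      ring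
    rw [e]
    exact div_le_div_of_nonneg_right (by linarith) hvu.le

lemma hasDerivAt_measureReal_orthantSweep (hat : a < t) :
    HasDerivAt (fun s => (expSumVolume ι).real (orthantSweep f a s))
      ((∑ i, max (f i) 0) * exp ((∑ i, f i) * t)) t := by
  set S := ∑ i, f i
  set P := ∑ i, max (f i) 0
  set κ := fun h => (exp (P * h) - 1) / h
  have hκ : Tendsto κ (𝓝[≠] 0) (𝓝 P) := tendsto_exp_mul_sub_one_div P
  have hfar : Tendsto (fun s => exp (S * s) * κ (t - s)) (𝓝[≠] t) (𝓝 (exp (S * t) * P)) := by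
    refine (((continuous_const.mul continuous_id).rexp.tendsto t).mono_left
      nhdsWithin_le_nhds).mul (hκ.comp ?_)
    exact (sub_self t ▸ Filter.map_subLeft_nhdsNE (c := t) (a := t)).le
  have hnear : Tendsto (fun s => exp (S * t) * κ (s - t)) (𝓝[≠] t) (𝓝 (exp (S * t) * P)) :=
    tendsto_const_nhds.mul
      (hκ.comp (sub_self t ▸ Filter.map_subRight_nhdsNE (c := t) (a := t)).le)
  have hslope : ∀ᶠ s in 𝓝[≠] t, slope (fun s => (expSumVolume ι).real (orthantSweep f a s)) t s
      ∈ uIcc (exp (S * s) * κ (t - s)) (exp (S * t) * κ (s - t)) := by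
    filter_upwards [self_mem_nhdsWithin, nhdsWithin_le_nhds (eventually_gt_nhds hat)]
      with s hst has
    rcases lt_or_gt_of_ne hst with hlt | hgt
    · rw [slope_comm, slope_def_field]
      exact mem_uIcc.2 (Or.inr (slope_measureReal_orthantSweep_mem_Icc f has.le hlt))
    · rw [slope_def_field]
      exact mem_uIcc.2 (Or.inl (slope_measureReal_orthantSweep_mem_Icc f hat.le hgt))
  rw [hasDerivAt_iff_tendsto_slope, mul_comm]
  exact tendsto_of_tendsto_of_tendsto_of_le_of_le' (by simpa using hfar.min hnear)
    (by simpa using hfar.max hnear) (hslope.mono fun _ hs => hs.1) (hslope.mono fun _ hs => hs.2)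

theorem measureReal_orthantSweep (hab : a ≤ b) :
    (expSumVolume ι).real (orthantSweep f a b)
      = exp ((∑ i, f i) * a) + (∑ i, max (f i) 0) * ∫ t in a..b, exp ((∑ i, f i) * t) := by
  -- Starting the sweep at `a - 1` makes it differentiable on both sides of `t = a`.
  have hderiv : ∀ t ∈ uIcc a b, HasDerivAt
      (fun s => (expSumVolume ι).real (orthantSweep f (a - 1) s))
      ((∑ i, max (f i) 0) * exp ((∑ i, f i) * t)) t := fun t ht =>
    hasDerivAt_measureReal_orthantSweep f (by linarith [(uIcc_of_le hab ▸ ht).1])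
  have hcont : Continuous fun t => (∑ i, max (f i) 0) * exp ((∑ i, f i) * t) := by fun_prop
  rw [← intervalIntegral.integral_const_mul,
    intervalIntegral.integral_eq_sub_of_hasDerivAt hderiv (hcont.intervalIntegrable a b),
    measureReal_orthantSweep_eq_add_sub f (by linarith : a - 1 ≤ a) hab]
  ring

end Sweep

/-- Lemma 4.7 of the paper. For any `f ∈ ℝ^d` and `L > 0`, with
`f_i⁺ = max(f_i,0)`, `f_i⁻ = min(f_i,0)` and `S = Σ_i f_i`:
`∫_{ℝ^d} 1{∃ t ∈ [0,L] : x < f t} e^{Σ_i x_i} dx`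
equals `1 + (Σ_i f_i⁺) L` if `S = 0`, and `(Σ_i f_i⁻)/S + (Σ_i f_i⁺)/S · e^{S L}`
otherwise. -/
theorem stmt8 {d : ℕ} (f : Fin d → ℝ) (L : ℝ) (hL : 0 < L) :
    ((∑ i, f i) = 0 →
      (∫ x : Fin d → ℝ,
        Set.indicator {x : Fin d → ℝ | ∃ t ∈ Icc (0 : ℝ) L, ∀ i, x i < f i * t}
          (fun x => Real.exp (∑ i, x i)) x)
      = 1 + (∑ i, max (f i) 0) * L) ∧
    ((∑ i, f i) ≠ 0 →
      (∫ x : Fin d → ℝ,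
        Set.indicator {x : Fin d → ℝ | ∃ t ∈ Icc (0 : ℝ) L, ∀ i, x i < f i * t}
          (fun x => Real.exp (∑ i, x i)) x)
      = (∑ i, min (f i) 0) / (∑ i, f i) +
        (∑ i, max (f i) 0) / (∑ i, f i) * Real.exp ((∑ i, f i) * L)) := by
  have hmeas := (isOpen_orthantSweep f 0 L).measurableSet
  have key : (∫ x : Fin d → ℝ,
      Set.indicator {x : Fin d → ℝ | ∃ t ∈ Icc (0 : ℝ) L, ∀ i, x i < f i * t}
        (fun x => exp (∑ i, x i)) x)
      = 1 + (∑ i, max (f i) 0) * ∫ t in (0 : ℝ)..L, exp ((∑ i, f i) * t) := by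
    change ∫ x, (orthantSweep f 0 L).indicator _ x = _
    rw [integral_indicator hmeas, ← measureReal_expSumVolume hmeas,
      measureReal_orthantSweep f hL.le, mul_zero, exp_zero]
  have hmin : ∑ i, min (f i) 0 = ∑ i, f i - ∑ i, max (f i) 0 := by
    rw [← Finset.sum_sub_distrib]
    exact Finset.sum_congr rfl fun i _ => by linarith [min_add_max (f i) 0]
  refine ⟨fun hS => ?_, fun hS => ?_⟩
  · rw [key, hS]
    simp
  · rw [key, integral_exp_mul hS, hmin, mul_zero, exp_zero]
    field_simp
    ring
end

section
/- Let T > 0 and let v : [0,T] → ℝ be convex and nondecreasing with v(0) = 0. Then for all s, t ∈ [0,T]: (v(s) + v(t) − v(|s − t|))/2 ≥ min(v(s), v(t)). -/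
/-!
For `s ≤ t`, superadditivity of `v` gives `v s + v (t - s) ≤ v t`, so the right-hand side is
at least `v s ≥ min (v s) (v t)`. Superadditivity comes from `v (a x) ≤ a v x` for `a ∈ [0, 1]`,
which is convexity between `0` and `x` together with `v 0 = 0`.
-/

open Set

section

variable {𝕜 E β : Type*} [Field 𝕜] [LinearOrder 𝕜] [IsStrictOrderedRing 𝕜]
  [AddCommGroup β] [PartialOrder β] [Module 𝕜 β]

theorem ConvexOn.map_smul_le_smul [AddCommGroup E] [Module 𝕜 E] {s : Set E} {f : E → β}
    (hf : ConvexOn 𝕜 s f) (h0s : (0 : E) ∈ s) (hf0 : f 0 = 0) {x : E} (hx : x ∈ s)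
    {a : 𝕜} (ha₀ : 0 ≤ a) (ha₁ : a ≤ 1) : f (a • x) ≤ a • f x := by
  simpa [hf0] using hf.2 h0s hx (sub_nonneg.2 ha₁) ha₀ (sub_add_cancel 1 a)

theorem ConvexOn.add_le_map_add [IsOrderedAddMonoid β] {s : Set 𝕜} {f : 𝕜 → β}
    (hf : ConvexOn 𝕜 s f) (h0s : (0 : 𝕜) ∈ s) (hf0 : f 0 = 0) {x y : 𝕜} (hx : 0 ≤ x) (hy : 0 ≤ y)
    (hxy : x + y ∈ s) : f x + f y ≤ f (x + y) := by
  rcases (add_nonneg hx hy).eq_or_lt with hzero | hpos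
  · obtain ⟨rfl, rfl⟩ : x = 0 ∧ y = 0 := ⟨by linarith, by linarith⟩
    simp [hf0]
  have hscale {z : 𝕜} (hz : 0 ≤ z) (hzle : z ≤ x + y) : f z ≤ (z / (x + y)) • f (x + y) := by
    have := hf.map_smul_le_smul h0s hf0 hxy (div_nonneg hz hpos.le) ((div_le_one hpos).2 hzle)
    rwa [smul_eq_mul, div_mul_cancel₀ z hpos.ne'] at this
  calc f x + f y
      ≤ (x / (x + y)) • f (x + y) + (y / (x + y)) • f (x + y) :=
        add_le_add (hscale hx (le_add_of_nonneg_right hy)) (hscale hy (le_add_of_nonneg_left hx))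
    _ = f (x + y) := by rw [← add_smul, ← add_div, div_self hpos.ne', one_smul]

end

theorem stmt12_general (T : ℝ) (v : ℝ → ℝ)
    (hconv : ConvexOn ℝ (Icc 0 T) v)
    (h0 : v 0 = 0) :
    ∀ s ∈ Icc (0 : ℝ) T, ∀ t ∈ Icc (0 : ℝ) T,
      min (v s) (v t) ≤ (v s + v t - v |s - t|) / 2 := by
  intro s hs t ht
  wlog hst : s ≤ t generalizing s t
  · have := this t ht s hs (le_of_not_ge hst)
    rwa [min_comm, add_comm (v s), abs_sub_comm]
  have hsuper : v s + v (t - s) ≤ v t := by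
    simpa using hconv.add_le_map_add (left_mem_Icc.2 (hs.1.trans hs.2)) h0 hs.1
      (sub_nonneg.2 hst) (by simpa using ht)
  rw [abs_sub_comm, abs_of_nonneg (sub_nonneg.2 hst)]
  linarith [min_le_left (v s) (v t)]

/-- Let `v : [0,T] → ℝ` be convex and nondecreasing with `v(0) = 0`.
Then for all `s, t ∈ [0,T]`: `(v(s) + v(t) - v(|s-t|))/2 ≥ min(v(s), v(t))`. -/
theorem stmt12 (T : ℝ) (hT : 0 < T) (v : ℝ → ℝ)
    (hconv : ConvexOn ℝ (Icc 0 T) v)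
    (hmono : MonotoneOn v (Icc 0 T))
    (h0 : v 0 = 0) :
    ∀ s ∈ Icc (0 : ℝ) T, ∀ t ∈ Icc (0 : ℝ) T,
      min (v s) (v t) ≤ (v s + v t - v |s - t|) / 2 :=
  stmt12_general T v hconv h0
end
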